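/- arXiv:1705.09799 — 5 statements merged into one kernel-verified Lean document; each statement's English description precedes it below -/
import Mathlib

section
/- Let E be a semi-S-factorable subset of M. Then: (i) every S-primitive element m ∈ E satisfies m ≅^S m and is in fact S-very strongly primitive; (ii) if additionally S ∩ Z(M) = ∅, then E is S-factorable. -/
namespace FactorizationPaper

variable {R : Type*} [CommRing R]

/-- `S` is a saturated multiplicatively closed subset of `R`:
it contains `1`, is closed under multiplication, and `x*y ∈ S` implies `x ∈ S` and `y ∈ S`. -/
def Saturated (S : Set R) : Prop :=
  1 ∈ S ∧ (∀ x ∈ S, ∀ y ∈ S, x * y ∈ S) ∧ ∀ x y : R, x * y ∈ S → x ∈ S ∧ y ∈ S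

/-- The submonoid of `R` associated to a saturated multiplicatively closed set. -/
def Saturated.submonoid {S : Set R} (hS : Saturated S) : Submonoid R where
  carrier := S
  one_mem' := hS.1
  mul_mem' := fun {a b} ha hb => hS.2.1 a ha b hb

section ElementDefs

variable (S : Set R) {N : Type*} [AddCommGroup N] [Module R N]

/-- `m ∼^S n` : `m` and `n` are S-associates. -/
def SAssoc (m n : N) : Prop := (∃ s ∈ S, m = s • n) ∧ (∃ s ∈ S, n = s • m)

/-- `m ≈^S n` : `m` and `n` are S-strong associates. -/
def SStrongAssoc (m n : N) : Prop := ∃ u : R, IsUnit u ∧ u ∈ S ∧ m = u • n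

/-- `m ≅^S n` : `m` and `n` are S-very strong associates. -/
def SVeryStrongAssoc (m n : N) : Prop :=
  SAssoc S m n ∧ ((m = 0 ∧ n = 0) ∨ ∀ s ∈ S, m = s • n → IsUnit s)

/-- `m` is S-primitive. -/
def SPrimitive (m : N) : Prop := ∀ s ∈ S, ∀ n : N, m = s • n → SAssoc S n m

/-- `m` is S-strongly primitive. -/
def SStronglyPrimitive (m : N) : Prop := ∀ s ∈ S, ∀ n : N, m = s • n → SStrongAssoc S n m

/-- `m` is S-very strongly primitive. -/
def SVeryStronglyPrimitive (m : N) : Prop := ∀ s ∈ S, ∀ n : N, m = s • n → SVeryStrongAssoc S n m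

/-- the three kinds of S-primitivity, indexed by `Fin 3` :
`0` = primitive, `1` = strongly primitive, `2` = very strongly primitive. -/
def PrimOf (k : Fin 3) (m : N) : Prop :=
  match k with
  | 0 => SPrimitive S m
  | 1 => SStronglyPrimitive S m
  | 2 => SVeryStronglyPrimitive S m

/-- `m = s • n` is a compact S-atomic factorization of `m`. -/
def IsCompactFactorization (m : N) (s : R) (n : N) : Prop :=
  s ∈ S ∧ SPrimitive S n ∧ m = s • n

/-- `m = s₁ ⋯ s_k • n` (with the `sᵢ` the members of the list `l`, nonunits in `S`)
is an S-factorization of `m`, of length `l.length`. -/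
def IsSFactorization (m : N) (l : List R) (n : N) : Prop :=
  (∀ s ∈ l, s ∈ S ∧ ¬ IsUnit s) ∧ m = l.prod • n

end ElementDefs

/-- `a ∼ b` : associates in `R` (i.e. S-associates with `S = R`, in `R` as an `R`-module). -/
def Assoc (a b : R) : Prop := SAssoc (Set.univ : Set R) a b

/-- `a ≈ b` : strong associates in `R`. -/
def StrongAssoc (a b : R) : Prop := SStrongAssoc (Set.univ : Set R) a b

/-- `a ≅ b` : very strong associates in `R`. -/
def VeryStrongAssoc (a b : R) : Prop := SVeryStrongAssoc (Set.univ : Set R) a b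

/-- `a` is irreducible. -/
def Irred (a : R) : Prop := ¬ IsUnit a ∧ ∀ b c : R, a = b * c → Assoc a b ∨ Assoc a c

/-- `a` is strongly irreducible. -/
def StrongIrred (a : R) : Prop :=
  ¬ IsUnit a ∧ ∀ b c : R, a = b * c → StrongAssoc a b ∨ StrongAssoc a c

/-- `a` is very strongly irreducible. -/
def VeryStrongIrred (a : R) : Prop :=
  ¬ IsUnit a ∧ ∀ b c : R, a = b * c → VeryStrongAssoc a b ∨ VeryStrongAssoc a c

/-- the three kinds of irreducibility, indexed by `Fin 3` :
`0` = irreducible, `1` = strongly irreducible, `2` = very strongly irreducible. -/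
def IrredOf (k : Fin 3) (a : R) : Prop :=
  match k with
  | 0 => Irred a
  | 1 => StrongIrred a
  | 2 => VeryStrongIrred a

section ElementDefs2

variable (S : Set R) {N : Type*} [AddCommGroup N] [Module R N]

/-- `m = s₁ ⋯ s_k • n` is an S-atomic factorization
(each `sᵢ` irreducible and in `S`, `n` S-primitive). -/
def IsSAtomicFactorization (m : N) (l : List R) (n : N) : Prop :=
  IsSFactorization S m l n ∧ (∀ s ∈ l, Irred s) ∧ SPrimitive S n

/-- an (α, β)-S-factorization: each `sᵢ` is α (a kind of irreducible)
and `n` is S-β (a kind of S-primitive). -/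
def IsABFactorization (kα kβ : Fin 3) (m : N) (l : List R) (n : N) : Prop :=
  IsSFactorization S m l n ∧ (∀ s ∈ l, IrredOf kα s) ∧ PrimOf S kβ n

/-- Isomorphism of S-atomic factorizations: same length, S-associate primitive parts,
and the irreducible parts match up to permutation and associates. -/
def FactorIso (l : List R) (n : N) (l' : List R) (n' : N) : Prop :=
  l.length = l'.length ∧ SAssoc S n n' ∧
    ∃ l'' : List R, l'.Perm l'' ∧ List.Forall₂ Assoc l l''

end ElementDefs2

section SetDefs

variable (S : Set R) {N : Type*} [AddCommGroup N] [Module R N]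

/-- `E ⊆ N` is compactly S-atomic. -/
def CompactlySAtomic (E : Set N) : Prop :=
  ∀ m ∈ E, m ≠ 0 → ∃ s n, IsCompactFactorization S m s n

/-- `E ⊆ N` is semi-S-factorable. -/
def SemiSFactorable (E : Set N) : Prop :=
  CompactlySAtomic S E ∧ ∀ m ∈ E, m ≠ 0 → ∀ s n s' n',
    IsCompactFactorization S m s n → IsCompactFactorization S m s' n' → Assoc s s'

/-- `E ⊆ N` is S-factorable. -/
def SFactorable (E : Set N) : Prop :=
  SemiSFactorable S E ∧ ∀ m ∈ E, m ≠ 0 → ∀ s n s' n',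
    IsCompactFactorization S m s n → IsCompactFactorization S m s' n' → SAssoc S n n'

/-- `S` splits `E ⊆ N`. -/
def Splits (E : Set N) : Prop :=
  SemiSFactorable S E ∧
    ∀ r : R, SPrimitive S r → ∀ m : N, SPrimitive S m →
      r • m ≠ 0 → r • m ∈ E → SPrimitive S (r • m)

end SetDefs

/-- The set of zero divisors of the module `M` in `R`. -/
def ZDiv (R : Type*) [CommRing R] (M : Type*) [AddCommGroup M] [Module R M] : Set R :=
  {r : R | ∃ m : M, m ≠ 0 ∧ r • m = 0}

/-- The annihilator of `M` in `R`, as a set. -/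
def AnnSet (R : Type*) [CommRing R] (M : Type*) [AddCommGroup M] [Module R M] : Set R :=
  {r : R | ∀ m : M, r • m = 0}

/-- The annihilator of `M` in `R`, as an ideal. -/
def AnnIdeal (R : Type*) [CommRing R] (M : Type*) [AddCommGroup M] [Module R M] : Ideal R where
  carrier := AnnSet R M
  zero_mem' := fun m => zero_smul R m
  add_mem' := fun {a b} ha hb m => by
    rw [add_smul, ha m, hb m, add_zero]
  smul_mem' := fun c x hx m => by
    rw [smul_eq_mul, mul_smul, hx m, smul_zero]

section ModuleProps

variable (S : Set R) (N : Type*) [AddCommGroup N] [Module R N]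

/-- `N` is S-présimplifiable. -/
def SPresimplifiable : Prop := ∀ s ∈ S, ∀ m : N, s • m = m → IsUnit s ∨ m = 0

/-- `N` is S-atomic. -/
def SAtomicModule : Prop := ∀ m : N, m ≠ 0 → ∃ l n, IsSAtomicFactorization S m l n

/-- `N` is (α, β)-S-atomic. -/
def ABAtomicModule (kα kβ : Fin 3) : Prop :=
  ∀ m : N, m ≠ 0 → ∃ l n, IsABFactorization S kα kβ m l n

/-- `N` is an S-UFM. -/
def SUFM : Prop := SAtomicModule S N ∧ ∀ m : N, m ≠ 0 → ∀ l n l' n',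
  IsSAtomicFactorization S m l n → IsSAtomicFactorization S m l' n' → FactorIso S l n l' n'

/-- `N` is an S-FFM. -/
def SFFM : Prop := SAtomicModule S N ∧ ∀ m : N, m ≠ 0 →
  ∃ Fs : Set (List R × N), Fs.Finite ∧
    ∀ l n, IsSAtomicFactorization S m l n → ∃ p ∈ Fs, FactorIso S l n p.1 p.2

/-- `N` is an S-BFM. -/
def SBFM : Prop := ∀ m : N, m ≠ 0 → ∃ B : ℕ,
  ∀ l n, IsSFactorization S m l n → l.length ≤ B

/-- `N` is an S-HFM. -/
def SHFM : Prop := SAtomicModule S N ∧ ∀ m : N, m ≠ 0 → ∀ l n l' n',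
  IsSAtomicFactorization S m l n → IsSAtomicFactorization S m l' n' → l.length = l'.length

end ModuleProps

section InE

variable (E : Set R)

/-- `R` is présimplifiable in `E`. -/
def PresimpIn : Prop := ∀ a ∈ E, a ≠ 0 → ¬ IsUnit a → ∀ r : R, a = r * a → IsUnit r ∨ a = 0

/-- `R` is atomic in `E`. -/
def AtomicIn : Prop := ∀ a ∈ E, a ≠ 0 → ¬ IsUnit a →
  ∃ l n, IsSAtomicFactorization (Set.univ : Set R) a l n

/-- `R` has unique factorization in `E`. -/
def UFIn : Prop := AtomicIn E ∧ ∀ a ∈ E, a ≠ 0 → ¬ IsUnit a → ∀ l n l' n',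
  IsSAtomicFactorization (Set.univ : Set R) a l n →
  IsSAtomicFactorization (Set.univ : Set R) a l' n' →
  FactorIso (Set.univ : Set R) l n l' n'

/-- `R` has finite factorization in `E`. -/
def FFIn : Prop := AtomicIn E ∧ ∀ a ∈ E, a ≠ 0 → ¬ IsUnit a →
  ∃ Fs : Set (List R × R), Fs.Finite ∧ ∀ l n,
    IsSAtomicFactorization (Set.univ : Set R) a l n →
      ∃ p ∈ Fs, FactorIso (Set.univ : Set R) l n p.1 p.2

/-- `R` is half factorial in `E`. -/
def HFIn : Prop := AtomicIn E ∧ ∀ a ∈ E, a ≠ 0 → ¬ IsUnit a → ∀ l n l' n',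
  IsSAtomicFactorization (Set.univ : Set R) a l n →
  IsSAtomicFactorization (Set.univ : Set R) a l' n' → l.length = l'.length

/-- `R` has bounded factorization in `E`. -/
def BFIn : Prop := ∀ a ∈ E, a ≠ 0 → ¬ IsUnit a →
  ∃ B : ℕ, ∀ l n, IsSFactorization (Set.univ : Set R) a l n → l.length ≤ B

end InE

/-- The set `T = S⁻¹S'` in the localization `R_S`. -/
def locT {S : Set R} (hS : Saturated S) (S' : Set R) : Set (Localization hS.submonoid) :=
  {x | ∃ s' ∈ S', ∃ t : hS.submonoid, x = Localization.mk s' t}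

section DomainDefs

variable (D : Type*) [CommRing D]

/-- two lists of ring elements agree up to order and associates. -/
def ListAssociated (l l' : List D) : Prop :=
  ∃ l'' : List D, l'.Perm l'' ∧ List.Forall₂ Associated l l''

/-- `D` is atomic: every nonzero nonunit is a finite product of irreducibles. -/
def DomAtomic : Prop := ∀ x : D, x ≠ 0 → ¬ IsUnit x →
  ∃ l : List D, (∀ a ∈ l, Irreducible a) ∧ x = l.prod

/-- `D` is a bounded factorization domain. -/
def DomBFD : Prop := ∀ x : D, x ≠ 0 → ¬ IsUnit x →
  ∃ B : ℕ, ∀ l : List D, (∀ a ∈ l, ¬ IsUnit a) → x = l.prod → l.length ≤ B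

/-- `D` is a half factorial domain. -/
def DomHFD : Prop := DomAtomic D ∧ ∀ x : D, x ≠ 0 → ¬ IsUnit x →
  ∀ l l' : List D, (∀ a ∈ l, Irreducible a) → x = l.prod →
    (∀ a ∈ l', Irreducible a) → x = l'.prod → l.length = l'.length

/-- `D` is a finite factorization domain. -/
def DomFFD : Prop := DomAtomic D ∧ ∀ x : D, x ≠ 0 → ¬ IsUnit x →
  ∃ Fs : Set (List D), Fs.Finite ∧ ∀ l : List D, (∀ a ∈ l, Irreducible a) → x = l.prod →
    ∃ l' ∈ Fs, ListAssociated D l l'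

/-- `D` is a unique factorization domain. -/
def DomUFD : Prop := DomAtomic D ∧ ∀ x : D, x ≠ 0 → ¬ IsUnit x →
  ∀ l l' : List D, (∀ a ∈ l, Irreducible a) → x = l.prod →
    (∀ a ∈ l', Irreducible a) → x = l'.prod → ListAssociated D l l'

end DomainDefs

section AXBXdefs

variable (B : Type*) [CommRing B] (A : Subring B)

/-- The ring `R = A + X·B[X]`, as a subring of `B[X]`. -/
def AXBX : Subring (Polynomial B) where
  carrier := {f | f.coeff 0 ∈ A}
  zero_mem' := by simp only [Set.mem_setOf_eq, Polynomial.coeff_zero]; exact zero_mem A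
  one_mem' := by
    simp only [Set.mem_setOf_eq, Polynomial.coeff_one, if_pos rfl]
    exact one_mem A
  add_mem' := fun {f g} hf hg => by
    simp only [Set.mem_setOf_eq, Polynomial.coeff_add] at *
    exact add_mem hf hg
  neg_mem' := fun {f} hf => by
    simp only [Set.mem_setOf_eq, Polynomial.coeff_neg] at *
    exact neg_mem hf
  mul_mem' := fun {f g} hf hg => by
    simp only [Set.mem_setOf_eq, Polynomial.mul_coeff_zero] at *
    exact mul_mem hf hg

/-- The saturated multiplicatively closed subset `S = (U(B) ∩ A) ∪ {u·Xⁿ : u ∈ U(B), n ≥ 1}`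
of `R = A + X·B[X]`. -/
def Sset : Set (AXBX B A) :=
  {f | (∃ u : B, IsUnit u ∧ u ∈ A ∧ (f : Polynomial B) = Polynomial.C u) ∨
       (∃ u : B, IsUnit u ∧ ∃ n : ℕ, 1 ≤ n ∧
          (f : Polynomial B) = Polynomial.C u * Polynomial.X ^ n)}

/-- The saturated multiplicatively closed subset `S₀ = U(B) ∩ A` of `A`. -/
def S0set : Set A := {a : A | IsUnit (a : B)}

end AXBXdefs


/-!
A semi-`S`-factorable set sees both `m = 1 • m` and `m = s • m` as compact factorizations of an
`S`-primitive `m`, so `s ∼ 1`, i.e. `s` is a unit; together with `S`-primitivity this upgrades `m`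
to `S`-very strongly primitive. When no element of `S` is a zero divisor on `M`, multiplication by
`s ∈ S` is injective, so from `s • n = s' • n'` and `s = a s'`, `s' = b s` one cancels to
`n' = a • n` and `n = b • n'`, with `a, b ∈ S` by saturation.
-/

section

variable {M : Type*} [AddCommGroup M] [Module R M] {S : Set R}

theorem isUnit_of_assoc_one {s : R} (h : Assoc 1 s) : IsUnit s := by
  obtain ⟨⟨r, -, hr⟩, -⟩ := h
  exact .of_mul_eq_one r (by rw [mul_comm, ← smul_eq_mul, ← hr])

theorem SemiSFactorable.isUnit_of_eq_smul_self {E : Set M} (hE : SemiSFactorable S E)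
    (hS1 : 1 ∈ S) {m : M} (hm : m ∈ E) (hm0 : m ≠ 0) (hprim : SPrimitive S m) {s : R}
    (hs : s ∈ S) (h : m = s • m) : IsUnit s :=
  isUnit_of_assoc_one <|
    hE.2 m hm hm0 1 m s m ⟨hS1, hprim, (one_smul R m).symm⟩ ⟨hs, hprim, h⟩

theorem SPrimitive.sVeryStronglyPrimitive (hmul : ∀ x ∈ S, ∀ y ∈ S, x * y ∈ S) {m : M}
    (hprim : SPrimitive S m) (hunit : m ≠ 0 → ∀ s ∈ S, m = s • m → IsUnit s) :
    SVeryStronglyPrimitive S m := by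
  intro s hs n hmn
  have hnm : SAssoc S n m := hprim s hs n hmn
  refine ⟨hnm, ?_⟩
  by_cases hm0 : m = 0
  · obtain ⟨⟨t, -, hnt⟩, -⟩ := hnm
    exact Or.inl ⟨by rw [hnt, hm0, smul_zero], hm0⟩
  · refine Or.inr fun t ht hnt => ?_
    have hst : m = (s * t) • m := by rw [mul_smul, ← hnt, ← hmn]
    exact isUnit_of_mul_isUnit_right (hunit hm0 (s * t) (hmul s hs t ht) hst)

theorem SVeryStronglyPrimitive.sVeryStrongAssoc_self (hS1 : 1 ∈ S) {m : M}
    (h : SVeryStronglyPrimitive S m) : SVeryStrongAssoc S m m :=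
  h 1 hS1 m (one_smul R m).symm

theorem smul_injective_of_inter_zDiv_eq_empty (hZ : S ∩ ZDiv R M = ∅) {s : R} (hs : s ∈ S) :
    Function.Injective (s • · : M → M) := by
  intro x y hxy
  by_contra hne
  refine Set.eq_empty_iff_forall_notMem.mp hZ s ⟨hs, x - y, sub_ne_zero.mpr hne, ?_⟩
  simpa only [smul_sub, sub_eq_zero] using hxy

theorem mem_and_eq_smul_of_smul_eq_smul (hS : Saturated S) (hZ : S ∩ ZDiv R M = ∅)
    {a s s' : R} {n n' : M} (hs : s ∈ S) (ha : s = a * s') (h : s • n = s' • n') :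
    a ∈ S ∧ n' = a • n := by
  obtain ⟨haS, hs'S⟩ := hS.2.2 a s' (ha ▸ hs)
  refine ⟨haS, smul_injective_of_inter_zDiv_eq_empty hZ hs'S ?_⟩
  change s' • n' = s' • a • n
  rw [smul_smul, mul_comm, ← ha, h]

theorem SemiSFactorable.sFactorable (hS : Saturated S) (hZ : S ∩ ZDiv R M = ∅) {E : Set M}
    (hE : SemiSFactorable S E) : SFactorable S E := by
  refine ⟨hE, fun m hm hm0 s n s' n' hf hf' => ?_⟩
  obtain ⟨⟨a, -, ha⟩, ⟨b, -, hb⟩⟩ := hE.2 m hm hm0 s n s' n' hf hf'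
  obtain ⟨hs, -, hmn⟩ := hf
  obtain ⟨hs', -, hmn'⟩ := hf'
  obtain ⟨haS, hn'⟩ := mem_and_eq_smul_of_smul_eq_smul hS hZ hs ha (hmn.symm.trans hmn')
  obtain ⟨hbS, hn⟩ := mem_and_eq_smul_of_smul_eq_smul hS hZ hs' hb (hmn'.symm.trans hmn)
  exact ⟨⟨b, hbS, hn⟩, ⟨a, haS, hn'⟩⟩

end

theorem statement0_general {R : Type*} [CommRing R] {M : Type*} [AddCommGroup M] [Module R M]
    (S : Set R) (hS : Saturated S) (E : Set M)
    (hE : SemiSFactorable S E) :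
    (∀ m ∈ E, SPrimitive S m → SVeryStrongAssoc S m m ∧ SVeryStronglyPrimitive S m) ∧
    (S ∩ ZDiv R M = ∅ → SFactorable S E) := by
  refine ⟨fun m hm hprim => ?_, fun hZ => hE.sFactorable hS hZ⟩
  have hvsp : SVeryStronglyPrimitive S m :=
    hprim.sVeryStronglyPrimitive hS.2.1 fun hm0 _ hs h =>
      hE.isUnit_of_eq_smul_self hS.1 hm hm0 hprim hs h
  exact ⟨hvsp.sVeryStrongAssoc_self hS.1, hvsp⟩

theorem statement0 {R : Type*} [CommRing R] {M : Type*} [AddCommGroup M] [Module R M]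
    [Nontrivial M] (S : Set R) (hS : Saturated S) (E : Set M)
    (hE : SemiSFactorable S E) :
    (∀ m ∈ E, SPrimitive S m → SVeryStrongAssoc S m m ∧ SVeryStronglyPrimitive S m) ∧
    (S ∩ ZDiv R M = ∅ → SFactorable S E) :=
  statement0_general S hS E hE

end FactorizationPaper
end

section
/- Suppose M is semi-S-factorable and S ∩ Z(M) = ∅. Then: M is S-présimplifiable iff R is présimplifiable in S \ Ann(M); M is an S-UFM iff R has unique factorization in S \ Ann(M); M is an S-FFM iff R has finite factorization in S \ Ann(M); M is an S-HFM iff R is half factorial in S \ Ann(M); M is an S-BFM iff R has bounded factorization in S \ Ann(M); and M is S-atomic iff R is atomic in S \ Ann(M). -/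
namespace FactorizationPaper

variable {R : Type*} [CommRing R]

/-!
Because `S ∩ Z(M) = ∅`, every `s ∈ S` acts injectively on `M`, and semi-`S`-factorability makes the
scalar of a compact factorization `m = t • n` unique up to associates. Consequently the `S`-atomic
factorizations `t • n = s₁ ⋯ sₖ • n'` are exactly the `t = s₁ ⋯ sₖ · c` with `c` a unit and
`n' = c • n`, i.e. the atomic factorizations of `t` in `R`. This transfers each factorization property
from `R` on `S` to `M`, and back along `a ↦ a • n₀` for a fixed nonzero `S`-primitive `n₀`.
Finally `S \ Ann(M) = S`, because `M ≠ 0` and no element of `S` kills a nonzero element.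
-/

section Ring

variable {E : Set R} {a b r u u' : R} {l l' : List R}

theorem assoc_iff_dvd_dvd : Assoc a b ↔ b ∣ a ∧ a ∣ b := by
  simp only [Assoc, SAssoc, Set.mem_univ, true_and, smul_eq_mul, dvd_iff_exists_eq_mul_left]

theorem assoc_of_isUnit (ha : IsUnit a) (hb : IsUnit b) : Assoc a b :=
  assoc_iff_dvd_dvd.2 ⟨hb.dvd, ha.dvd⟩

theorem sPrimitive_univ_iff : SPrimitive (Set.univ : Set R) u ↔ IsUnit u := by
  refine ⟨fun h => ?_, fun hu s _ b hb => ?_⟩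
  · exact isUnit_of_dvd_one (assoc_iff_dvd_dvd.1 (h u trivial 1 (mul_one u).symm)).1
  · exact assoc_of_isUnit (isUnit_of_dvd_unit (Dvd.intro_left s hb.symm) hu) hu

theorem eq_nil_of_isSFactorization_univ (ha : IsUnit a)
    (h : IsSFactorization (Set.univ : Set R) a l r) : l = [] :=
  List.eq_nil_iff_forall_not_mem.2 fun s hs => (h.1 s hs).2 <|
    List.prod_isUnit_iff.1 (isUnit_of_dvd_unit (Dvd.intro r h.2.symm) ha) s hs

theorem isSAtomicFactorization_univ_iff :
    IsSAtomicFactorization (Set.univ : Set R) a l u ↔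
      (∀ s ∈ l, Irred s) ∧ IsUnit u ∧ a = l.prod * u := by
  simp only [IsSAtomicFactorization, IsSFactorization, sPrimitive_univ_iff, Set.mem_univ, true_and,
    smul_eq_mul]
  exact ⟨fun ⟨⟨_, h⟩, hl, hu⟩ => ⟨hl, hu, h⟩,
    fun ⟨hl, hu, h⟩ => ⟨⟨fun s hs => (hl s hs).1, h⟩, hl, hu⟩⟩

theorem FactorIso.of_sAssoc {N N' : Type*} [AddCommGroup N] [Module R N] [AddCommGroup N']
    [Module R N'] {S S' : Set R} {n n' : N} {m m' : N'} (h : FactorIso S l n l' n')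
    (hm : SAssoc S' m m') : FactorIso S' l m l' m' :=
  ⟨h.1, hm, h.2.2⟩

theorem factorIso_nil_of_isUnit (hu : IsUnit u) (hu' : IsUnit u') :
    FactorIso (Set.univ : Set R) [] u [] u' :=
  ⟨rfl, assoc_of_isUnit hu hu', [], List.Perm.nil, List.Forall₂.nil⟩

theorem AtomicIn.exists_factorization (h : AtomicIn E) (ha : a ∈ E) (ha0 : a ≠ 0) :
    ∃ l u, IsSAtomicFactorization (Set.univ : Set R) a l u := by
  by_cases hu : IsUnit a
  · exact ⟨[], a, isSAtomicFactorization_univ_iff.2 ⟨by simp, hu, by simp⟩⟩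
  · exact h a ha ha0 hu

theorem UFIn.factorIso (h : UFIn E) (ha : a ∈ E) (ha0 : a ≠ 0)
    (hf : IsSAtomicFactorization (Set.univ : Set R) a l u)
    (hf' : IsSAtomicFactorization (Set.univ : Set R) a l' u') :
    FactorIso (Set.univ : Set R) l u l' u' := by
  by_cases hu : IsUnit a
  · obtain rfl := eq_nil_of_isSFactorization_univ hu hf.1
    obtain rfl := eq_nil_of_isSFactorization_univ hu hf'.1
    exact factorIso_nil_of_isUnit (sPrimitive_univ_iff.1 hf.2.2) (sPrimitive_univ_iff.1 hf'.2.2)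
  · exact h.2 a ha ha0 hu l u l' u' hf hf'

theorem FFIn.exists_finite (h : FFIn E) (ha : a ∈ E) (ha0 : a ≠ 0) :
    ∃ Fs : Set (List R × R), Fs.Finite ∧ ∀ l u,
      IsSAtomicFactorization (Set.univ : Set R) a l u →
        ∃ p ∈ Fs, FactorIso (Set.univ : Set R) l u p.1 p.2 := by
  by_cases hu : IsUnit a
  · refine ⟨{([], 1)}, Set.finite_singleton _, fun l u hf => ⟨_, rfl, ?_⟩⟩
    obtain rfl := eq_nil_of_isSFactorization_univ hu hf.1
    exact factorIso_nil_of_isUnit (sPrimitive_univ_iff.1 hf.2.2) isUnit_one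
  · exact h.2 a ha ha0 hu

theorem HFIn.length_eq (h : HFIn E) (ha : a ∈ E) (ha0 : a ≠ 0)
    (hf : IsSAtomicFactorization (Set.univ : Set R) a l u)
    (hf' : IsSAtomicFactorization (Set.univ : Set R) a l' u') : l.length = l'.length := by
  by_cases hu : IsUnit a
  · rw [eq_nil_of_isSFactorization_univ hu hf.1, eq_nil_of_isSFactorization_univ hu hf'.1]
  · exact h.2 a ha ha0 hu l u l' u' hf hf'

theorem BFIn.exists_bound (h : BFIn E) (ha : a ∈ E) (ha0 : a ≠ 0) :
    ∃ B : ℕ, ∀ l r, IsSFactorization (Set.univ : Set R) a l r → l.length ≤ B := by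
  by_cases hu : IsUnit a
  · exact ⟨0, fun l r hf => by simp [eq_nil_of_isSFactorization_univ hu hf]⟩
  · exact h a ha ha0 hu

variable {S : Set R}

theorem Saturated.mem_of_dvd (hS : Saturated S) (hab : a ∣ b) (hb : b ∈ S) : a ∈ S := by
  obtain ⟨c, rfl⟩ := hab
  exact (hS.2.2 a c hb).1

theorem Saturated.mem_of_isSFactorization_univ (hS : Saturated S) (ha : a ∈ S)
    (h : IsSFactorization (Set.univ : Set R) a l r) : (∀ s ∈ l, s ∈ S) ∧ r ∈ S :=
  ⟨fun _ hs => hS.mem_of_dvd ((List.dvd_prod hs).trans (Dvd.intro r h.2.symm)) ha,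
    hS.mem_of_dvd (Dvd.intro_left _ h.2.symm) ha⟩

end Ring

section Module

variable {M : Type*} [AddCommGroup M] [Module R M] {S : Set R} {a b t u : R} {l : List R}

theorem Saturated.sPrimitive_smul (hS : Saturated S) (hu : IsUnit u) (huS : u ∈ S) {n : M}
    (hn : SPrimitive S n) : SPrimitive S (u • n) := by
  obtain ⟨v, rfl⟩ := hu
  intro s hs x hx
  have hinv : ((v⁻¹ : Rˣ) : R) ∈ S := hS.mem_of_dvd (v⁻¹).isUnit.dvd hS.1
  obtain ⟨⟨σ, hσ, hxn⟩, -⟩ := hn _ (hS.2.1 _ hinv _ hs) x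
    (by rw [mul_smul, ← hx, smul_smul, Units.inv_mul, one_smul])
  exact ⟨⟨σ * ↑v⁻¹, hS.2.1 _ hσ _ hinv, by rw [smul_smul, mul_assoc, Units.inv_mul, mul_one, hxn]⟩,
    ⟨s, hs, hx⟩⟩

theorem Saturated.sAssoc_smul_of_assoc (hS : Saturated S) (hab : Assoc a b) (ha : a ∈ S) (n : M) :
    SAssoc S (a • n) (b • n) := by
  obtain ⟨⟨x, rfl⟩, ⟨y, hy⟩⟩ := assoc_iff_dvd_dvd.1 hab
  have hb : b ∈ S := hS.mem_of_dvd (dvd_mul_right b x) ha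
  exact ⟨⟨x, hS.mem_of_dvd (dvd_mul_left x b) ha, by rw [smul_smul, mul_comm]⟩,
    ⟨y, hS.mem_of_dvd (Dvd.intro_left _ hy.symm) hb, by rw [smul_smul, mul_comm y, ← hy]⟩⟩

theorem IsSFactorization.smul_of_univ (hS : Saturated S) (ha : a ∈ S)
    {r : R} (h : IsSFactorization (Set.univ : Set R) a l r) (n : M) :
    IsSFactorization S (a • n) l (r • n) :=
  ⟨fun s hs => ⟨(hS.mem_of_isSFactorization_univ ha h).1 s hs, (h.1 s hs).2⟩,
    by rw [h.2, smul_assoc]⟩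

theorem IsSAtomicFactorization.smul_of_univ (hS : Saturated S) (ha : a ∈ S)
    (h : IsSAtomicFactorization (Set.univ : Set R) a l u) {n : M} (hn : SPrimitive S n) :
    IsSAtomicFactorization S (a • n) l (u • n) :=
  ⟨h.1.smul_of_univ hS ha n, h.2.1, hS.sPrimitive_smul (sPrimitive_univ_iff.1 h.2.2)
    (hS.mem_of_isSFactorization_univ ha h.1).2 hn⟩

theorem isSMulRegular_of_mem (hZ : S ∩ ZDiv R M = ∅) {s : R} (hs : s ∈ S) : IsSMulRegular M s := by
  intro x y hxy
  by_contra hne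
  refine Set.eq_empty_iff_forall_notMem.1 hZ s ⟨hs, x - y, sub_ne_zero.2 hne, ?_⟩
  rw [smul_sub]
  exact sub_eq_zero.2 hxy

theorem smul_ne_zero_of_mem (hZ : S ∩ ZDiv R M = ∅) {s : R} (hs : s ∈ S) {m : M} (hm : m ≠ 0) :
    s • m ≠ 0 :=
  fun h => hm (isSMulRegular_of_mem hZ hs (h.trans (smul_zero s).symm))

theorem sdiff_annSet_eq [Nontrivial M] (hZ : S ∩ ZDiv R M = ∅) : S \ AnnSet R M = S := by
  obtain ⟨m, hm⟩ := exists_ne (0 : M)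
  exact Disjoint.sdiff_eq_left <|
    Set.disjoint_left.2 fun s hs hann => smul_ne_zero_of_mem hZ hs hm (hann m)

theorem exists_sPrimitive_ne_zero [Nontrivial M] (hM : SemiSFactorable S (Set.univ : Set M)) :
    ∃ n : M, SPrimitive S n ∧ n ≠ 0 := by
  obtain ⟨m, hm⟩ := exists_ne (0 : M)
  obtain ⟨t, n, -, hn, rfl⟩ := hM.1 m trivial hm
  exact ⟨n, hn, right_ne_zero_of_smul hm⟩

theorem isUnit_of_smul_eq (hS : Saturated S) (hM : SemiSFactorable S (Set.univ : Set M)) {n : M}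
    (hn0 : n ≠ 0) (hn : SPrimitive S n) {c : R} (hc : c ∈ S) (h : c • n = n) : IsUnit c :=
  isUnit_of_dvd_one (assoc_iff_dvd_dvd.1
    (hM.2 n trivial hn0 1 n c n ⟨hS.1, hn, (one_smul R n).symm⟩ ⟨hc, hn, h.symm⟩)).1

theorem sPresimplifiable (hS : Saturated S) (hM : SemiSFactorable S (Set.univ : Set M))
    (hZ : S ∩ ZDiv R M = ∅) : SPresimplifiable S M := by
  intro s hs m hsm
  by_cases hm : m = 0
  · exact Or.inr hm
  obtain ⟨t, n, ht, hn, rfl⟩ := hM.1 m trivial hm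
  refine Or.inl (isUnit_of_smul_eq hS hM (right_ne_zero_of_smul hm) hn hs ?_)
  exact isSMulRegular_of_mem hZ ht (by simp only [smul_comm t s n, hsm])

theorem presimpIn_of_sPresimplifiable (M : Type*) [AddCommGroup M] [Module R M] [Nontrivial M]
    (hS : Saturated S) (hZ : S ∩ ZDiv R M = ∅) (h : SPresimplifiable S M) : PresimpIn S := by
  intro a ha _ _ r hr
  obtain ⟨m, hm⟩ := exists_ne (0 : M)
  refine (h r (hS.2.2 r a (hr ▸ ha)).1 (a • m) (by rw [smul_smul, ← hr])).imp id fun h0 => ?_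
  exact absurd h0 (smul_ne_zero_of_mem hZ ha hm)

theorem exists_isSAtomicFactorization_univ_of_smul (hS : Saturated S)
    (hM : SemiSFactorable S (Set.univ : Set M)) (hZ : S ∩ ZDiv R M = ∅) (ht : t ∈ S) {n : M}
    (hn : SPrimitive S n) (hn0 : n ≠ 0) {n' : M} (h : IsSAtomicFactorization S (t • n) l n') :
    ∃ c, IsSAtomicFactorization (Set.univ : Set R) t l c ∧ n' = c • n := by
  obtain ⟨⟨hl, hprod⟩, hirr, hn'⟩ := h
  have hpS : l.prod ∈ S := hS.submonoid.list_prod_mem fun s hs => (hl s hs).1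
  obtain ⟨⟨c, rfl⟩, ⟨c', hc'⟩⟩ := assoc_iff_dvd_dvd.1 <| hM.2 _ trivial
    (smul_ne_zero_of_mem hZ ht hn0) _ _ _ _ ⟨ht, hn, rfl⟩ ⟨hpS, hn', hprod⟩
  have hcS : c ∈ S := hS.mem_of_dvd (dvd_mul_left c _) ht
  have hc'S : c' ∈ S := hS.mem_of_dvd (Dvd.intro_left _ hc'.symm) hpS
  -- `t = l.prod * c` and `l.prod = t * c'`, so `c * c'` fixes the primitive `n`
  have hcc' : (c * c') • n = n :=
    isSMulRegular_of_mem hZ hpS (by simp only [smul_smul, ← mul_assoc, ← hc'])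
  refine ⟨c, isSAtomicFactorization_univ_iff.2 ⟨hirr, ?_, rfl⟩, ?_⟩
  · exact isUnit_of_mul_isUnit_left (isUnit_of_smul_eq hS hM hn0 hn (hS.2.1 _ hcS _ hc'S) hcc')
  · exact isSMulRegular_of_mem hZ hpS (by simp only [← hprod, smul_smul])

theorem exists_isSFactorization_univ_of_smul (hS : Saturated S)
    (hM : SemiSFactorable S (Set.univ : Set M)) (ht : t ∈ S) {n : M} (hn : SPrimitive S n)
    (hne : t • n ≠ 0) {n' : M} (h : IsSFactorization S (t • n) l n') :
    ∃ r, IsSFactorization (Set.univ : Set R) t l r := by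
  obtain ⟨hl, hprod⟩ := h
  have hn'0 : n' ≠ 0 := by
    rintro rfl
    exact hne (by rw [hprod, smul_zero])
  obtain ⟨t', n₂, ht', hn₂, rfl⟩ := hM.1 n' trivial hn'0
  have hpS : l.prod ∈ S := hS.submonoid.list_prod_mem fun s hs => (hl s hs).1
  obtain ⟨⟨c, hc⟩, -⟩ := assoc_iff_dvd_dvd.1 <| hM.2 _ trivial hne _ _ _ _ ⟨ht, hn, rfl⟩
    ⟨hS.2.1 _ hpS _ ht', hn₂, by rw [hprod, mul_smul]⟩
  exact ⟨t' * c, fun s hs => ⟨trivial, (hl s hs).2⟩, by rw [smul_eq_mul, hc, mul_assoc]⟩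

theorem sAtomicModule_iff_atomicIn [Nontrivial M] (hS : Saturated S)
    (hM : SemiSFactorable S (Set.univ : Set M)) (hZ : S ∩ ZDiv R M = ∅) :
    SAtomicModule S M ↔ AtomicIn S := by
  obtain ⟨n₀, hn₀, hn₀0⟩ := exists_sPrimitive_ne_zero hM
  constructor
  · intro h a ha _ _
    obtain ⟨l, n', hf⟩ := h _ (smul_ne_zero_of_mem hZ ha hn₀0)
    obtain ⟨c, hc, -⟩ := exists_isSAtomicFactorization_univ_of_smul hS hM hZ ha hn₀ hn₀0 hf
    exact ⟨l, c, hc⟩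
  · intro h m hm
    obtain ⟨t, n, ht, hn, rfl⟩ := hM.1 m trivial hm
    obtain ⟨l, c, hc⟩ := h.exists_factorization ht (left_ne_zero_of_smul hm)
    exact ⟨l, c • n, hc.smul_of_univ hS ht hn⟩

theorem sUFM_iff_uFIn [Nontrivial M] (hS : Saturated S)
    (hM : SemiSFactorable S (Set.univ : Set M)) (hZ : S ∩ ZDiv R M = ∅) :
    SUFM S M ↔ UFIn S := by
  obtain ⟨n₀, hn₀, hn₀0⟩ := exists_sPrimitive_ne_zero hM
  constructor
  · rintro ⟨hat, huf⟩
    refine ⟨(sAtomicModule_iff_atomicIn hS hM hZ).1 hat, fun a ha _ _ l u l' u' hf hf' => ?_⟩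
    refine (huf _ (smul_ne_zero_of_mem hZ ha hn₀0) _ _ _ _ (hf.smul_of_univ hS ha hn₀)
      (hf'.smul_of_univ hS ha hn₀)).of_sAssoc ?_
    exact assoc_of_isUnit (sPrimitive_univ_iff.1 hf.2.2) (sPrimitive_univ_iff.1 hf'.2.2)
  · intro huf
    refine ⟨(sAtomicModule_iff_atomicIn hS hM hZ).2 huf.1, fun m hm l n l' n' hf hf' => ?_⟩
    obtain ⟨t, n₁, ht, hn₁, rfl⟩ := hM.1 m trivial hm
    have hn₁0 := right_ne_zero_of_smul hm
    obtain ⟨c, hc, rfl⟩ := exists_isSAtomicFactorization_univ_of_smul hS hM hZ ht hn₁ hn₁0 hf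
    obtain ⟨c', hc', rfl⟩ := exists_isSAtomicFactorization_univ_of_smul hS hM hZ ht hn₁ hn₁0 hf'
    have hiso := huf.factorIso ht (left_ne_zero_of_smul hm) hc hc'
    exact hiso.of_sAssoc
      (hS.sAssoc_smul_of_assoc hiso.2.1 (hS.mem_of_isSFactorization_univ ht hc.1).2 n₁)

theorem sFFM_iff_fFIn [Nontrivial M] (hS : Saturated S)
    (hM : SemiSFactorable S (Set.univ : Set M)) (hZ : S ∩ ZDiv R M = ∅) :
    SFFM S M ↔ FFIn S := by
  obtain ⟨n₀, hn₀, hn₀0⟩ := exists_sPrimitive_ne_zero hM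
  constructor
  · rintro ⟨hat, hff⟩
    refine ⟨(sAtomicModule_iff_atomicIn hS hM hZ).1 hat, fun a ha _ _ => ?_⟩
    obtain ⟨Fs, hFs, hcover⟩ := hff _ (smul_ne_zero_of_mem hZ ha hn₀0)
    refine ⟨(fun p => (p.1, 1)) '' Fs, hFs.image _, fun l u hf => ?_⟩
    obtain ⟨p, hp, hiso⟩ := hcover l _ (hf.smul_of_univ hS ha hn₀)
    exact ⟨_, Set.mem_image_of_mem _ hp,
      hiso.of_sAssoc (assoc_of_isUnit (sPrimitive_univ_iff.1 hf.2.2) isUnit_one)⟩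
  · intro hff
    refine ⟨(sAtomicModule_iff_atomicIn hS hM hZ).2 hff.1, fun m hm => ?_⟩
    obtain ⟨t, n, ht, hn, rfl⟩ := hM.1 m trivial hm
    obtain ⟨Fs, hFs, hcover⟩ := hff.exists_finite ht (left_ne_zero_of_smul hm)
    refine ⟨(fun p => (p.1, p.2 • n)) '' Fs, hFs.image _, fun l n' hf => ?_⟩
    obtain ⟨c, hc, rfl⟩ :=
      exists_isSAtomicFactorization_univ_of_smul hS hM hZ ht hn (right_ne_zero_of_smul hm) hf
    obtain ⟨p, hp, hiso⟩ := hcover l c hc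
    exact ⟨_, Set.mem_image_of_mem _ hp, hiso.of_sAssoc
      (hS.sAssoc_smul_of_assoc hiso.2.1 (hS.mem_of_isSFactorization_univ ht hc.1).2 n)⟩

theorem sHFM_iff_hFIn [Nontrivial M] (hS : Saturated S)
    (hM : SemiSFactorable S (Set.univ : Set M)) (hZ : S ∩ ZDiv R M = ∅) :
    SHFM S M ↔ HFIn S := by
  obtain ⟨n₀, hn₀, hn₀0⟩ := exists_sPrimitive_ne_zero hM
  constructor
  · rintro ⟨hat, hhf⟩
    exact ⟨(sAtomicModule_iff_atomicIn hS hM hZ).1 hat, fun a ha _ _ l u l' u' hf hf' =>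
      hhf _ (smul_ne_zero_of_mem hZ ha hn₀0) _ _ _ _ (hf.smul_of_univ hS ha hn₀)
        (hf'.smul_of_univ hS ha hn₀)⟩
  · intro hhf
    refine ⟨(sAtomicModule_iff_atomicIn hS hM hZ).2 hhf.1, fun m hm l n l' n' hf hf' => ?_⟩
    obtain ⟨t, n₁, ht, hn₁, rfl⟩ := hM.1 m trivial hm
    have hn₁0 := right_ne_zero_of_smul hm
    obtain ⟨c, hc, -⟩ := exists_isSAtomicFactorization_univ_of_smul hS hM hZ ht hn₁ hn₁0 hf
    obtain ⟨c', hc', -⟩ := exists_isSAtomicFactorization_univ_of_smul hS hM hZ ht hn₁ hn₁0 hf'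
    exact hhf.length_eq ht (left_ne_zero_of_smul hm) hc hc'

theorem sBFM_iff_bFIn [Nontrivial M] (hS : Saturated S)
    (hM : SemiSFactorable S (Set.univ : Set M)) (hZ : S ∩ ZDiv R M = ∅) :
    SBFM S M ↔ BFIn S := by
  constructor
  · intro h a ha _ _
    obtain ⟨n₀, hn₀⟩ := exists_ne (0 : M)
    obtain ⟨B, hB⟩ := h _ (smul_ne_zero_of_mem hZ ha hn₀)
    exact ⟨B, fun l r hf => hB l _ (hf.smul_of_univ hS ha n₀)⟩
  · intro h m hm
    obtain ⟨t, n, ht, hn, rfl⟩ := hM.1 m trivial hm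
    obtain ⟨B, hB⟩ := h.exists_bound ht (left_ne_zero_of_smul hm)
    refine ⟨B, fun l n' hf => ?_⟩
    obtain ⟨r, hr⟩ := exists_isSFactorization_univ_of_smul hS hM ht hn hm hf
    exact hB l r hr

end Module

theorem statement2 {R : Type*} [CommRing R] {M : Type*} [AddCommGroup M] [Module R M]
    [Nontrivial M] (S : Set R) (hS : Saturated S)
    (hM : SemiSFactorable S (Set.univ : Set M)) (hZ : S ∩ ZDiv R M = ∅) :
    (SPresimplifiable S M ↔ PresimpIn (S \ AnnSet R M)) ∧
    (SUFM S M ↔ UFIn (S \ AnnSet R M)) ∧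
    (SFFM S M ↔ FFIn (S \ AnnSet R M)) ∧
    (SHFM S M ↔ HFIn (S \ AnnSet R M)) ∧
    (SBFM S M ↔ BFIn (S \ AnnSet R M)) ∧
    (SAtomicModule S M ↔ AtomicIn (S \ AnnSet R M)) := by
  rw [sdiff_annSet_eq hZ]
  have hpresimp := sPresimplifiable hS hM hZ
  exact ⟨iff_of_true hpresimp (presimpIn_of_sPresimplifiable M hS hZ hpresimp),
    sUFM_iff_uFIn hS hM hZ, sFFM_iff_fFIn hS hM hZ, sHFM_iff_hFIn hS hM hZ,
    sBFM_iff_bFIn hS hM hZ, sAtomicModule_iff_atomicIn hS hM hZ⟩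

end FactorizationPaper
end

section
/- Suppose S splits M, S' is a saturated multiplicatively closed subset of R, and S' \ Ann(M) is compactly S-atomic (as a subset of the R-module R). Then S splits S' \ Ann(M) (as a subset of the R-module R). Moreover, if S' = R, then S splits the R-module R/Ann(M) (i.e., S splits the subset E = R/Ann(M) of the R-module R/Ann(M)). -/
namespace FactorizationPaper

variable {R : Type*} [CommRing R]

/-!
If `S` splits `M`, every `a ∉ Ann(M)` satisfies `a • y ≠ 0` for some `S`-primitive `y ∈ M`
(factor any `x` with `a • x ≠ 0`). Evaluation at `y`, from `R` or from `R ⧸ Ann(M)` into `M`,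
sends `S`-primitive elements to `S`-primitive elements or to `0`; conversely it reflects
`S`-primitivity of elements with nonzero image, because in the semi-`S`-factorable module `M` a
nonzero `S`-primitive element is divisible only by units of `S` whose inverse lies in `S`. Both
splitting statements are thereby pulled back from `M`.
-/
section Splitting

variable {S : Set R} {N P : Type*} [AddCommGroup N] [Module R N] [AddCommGroup P] [Module R P]

def PreservesSPrimitive (S : Set R) (f : N →ₗ[R] P) : Prop :=
  ∀ n : N, SPrimitive S n → f n ≠ 0 → SPrimitive S (f n)

lemma SPrimitive.of_eq_smul (hS : Saturated S) {m m' : N} (hm : SPrimitive S m) {t : R}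
    (ht : t ∈ S) (hmt : m = t • m') : SPrimitive S m' := by
  intro s hs p hp
  obtain ⟨⟨u, hu, hpu⟩, -⟩ := hm (t * s) (hS.2.1 t ht s hs) p (by rw [hmt, hp, smul_smul])
  exact ⟨⟨u * t, hS.2.1 u hu t ht, by rw [hpu, hmt, smul_smul]⟩, ⟨s, hs, hp⟩⟩

lemma exists_sPrimitive_smul_ne_zero (hM : CompactlySAtomic S (Set.univ : Set N)) {a : R}
    (ha : a ∉ AnnSet R N) : ∃ y : N, SPrimitive S y ∧ a • y ≠ 0 := by
  obtain ⟨x, hx⟩ : ∃ x : N, a • x ≠ 0 := by simpa [AnnSet] using ha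
  have hx0 : x ≠ 0 := by rintro rfl; exact hx (smul_zero a)
  obtain ⟨t, y, -, hy, rfl⟩ := hM x (Set.mem_univ x) hx0
  exact ⟨y, hy, fun h => hx (by rw [smul_comm, h, smul_zero])⟩

lemma exists_mul_eq_one_of_sPrimitive_eq_smul (hS : Saturated S)
    (hN : SemiSFactorable S (Set.univ : Set N)) {m n : N} (hm0 : m ≠ 0) (hm : SPrimitive S m)
    {s : R} (hs : s ∈ S) (hmn : m = s • n) : ∃ w ∈ S, w * s = 1 := by
  have hn0 : n ≠ 0 := by rintro rfl; exact hm0 (by rw [hmn, smul_zero])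
  obtain ⟨t, z, ht, hz, rfl⟩ := hN.1 n (Set.mem_univ n) hn0
  -- `m = 1 • m = (s * t) • z` are two compact factorizations of `m`
  obtain ⟨⟨u, -, hu⟩, -⟩ := hN.2 m (Set.mem_univ m) hm0 1 m (s * t) z
    ⟨hS.1, hm, (one_smul R m).symm⟩ ⟨hS.2.1 s hs t ht, hz, by rw [hmn, smul_smul]⟩
  rw [smul_eq_mul] at hu
  have hsw : s * (t * u) ∈ S := by rw [show s * (t * u) = u * (s * t) by ring, ← hu]; exact hS.1
  exact ⟨t * u, (hS.2.2 s (t * u) hsw).2, by linear_combination -hu⟩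

lemma SPrimitive.of_map (hS : Saturated S) (hP : SemiSFactorable S (Set.univ : Set P))
    (f : N →ₗ[R] P) {n : N} (hf0 : f n ≠ 0) (hf : SPrimitive S (f n)) : SPrimitive S n := by
  intro s hs p hnp
  obtain ⟨w, hw, hws⟩ := exists_mul_eq_one_of_sPrimitive_eq_smul hS hP hf0 hf hs
    (by rw [hnp, map_smul])
  exact ⟨⟨w, hw, by rw [hnp, smul_smul, hws, one_smul]⟩, ⟨s, hs, hnp⟩⟩

lemma assoc_of_map_ne_zero (hP : SemiSFactorable S (Set.univ : Set P)) {f : N →ₗ[R] P}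
    (hf : PreservesSPrimitive S f) {m n n' : N} {s s' : R} (hm : f m ≠ 0)
    (h : IsCompactFactorization S m s n) (h' : IsCompactFactorization S m s' n') :
    Assoc s s' := by
  obtain ⟨hs, hn, rfl⟩ := h
  obtain ⟨hs', hn', hmn'⟩ := h'
  rw [map_smul] at hm
  have hfmn' : s • f n = s' • f n' := by rw [← map_smul, ← map_smul, hmn']
  have hn'0 : f n' ≠ 0 := by rintro h; exact hm (by rw [hfmn', h, smul_zero])
  exact hP.2 _ (Set.mem_univ _) hm s (f n) s' (f n')
    ⟨hs, hf n hn (right_ne_zero_of_smul hm), rfl⟩ ⟨hs', hf n' hn' hn'0, hfmn'⟩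

theorem splits_of_forall_exists_map (hS : Saturated S) (hP : Splits S (Set.univ : Set P))
    {E : Set N} (hE : CompactlySAtomic S E)
    (hmaps : ∀ m ∈ E, m ≠ 0 → ∃ f : N →ₗ[R] P, PreservesSPrimitive S f ∧ f m ≠ 0) :
    Splits S E := by
  refine ⟨⟨hE, fun m hmE hm0 s n s' n' h h' => ?_⟩, fun r hr m hm hrm0 hrmE => ?_⟩
  · obtain ⟨f, hf, hfm⟩ := hmaps m hmE hm0
    exact assoc_of_map_ne_zero hP.1 hf hfm h h'
  · obtain ⟨f, hf, hfrm⟩ := hmaps _ hrmE hrm0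
    rw [map_smul] at hfrm
    have hfm := hf m hm (right_ne_zero_of_smul hfrm)
    refine SPrimitive.of_map hS hP.1 f (by rwa [map_smul]) ?_
    rw [map_smul]
    exact hP.2 r hr (f m) hfm hfrm (Set.mem_univ _)

end Splitting

section Annihilator

variable {S : Set R} {M : Type*} [AddCommGroup M] [Module R M]

def evalQuotAnn (y : M) : R ⧸ AnnIdeal R M →ₗ[R] M :=
  (AnnIdeal R M).liftQ (LinearMap.toSpanSingleton R M y) fun _ hr => LinearMap.mem_ker.mpr (hr y)

@[simp]
lemma evalQuotAnn_mk (y : M) (r : R) : evalQuotAnn y (Submodule.Quotient.mk r) = r • y := rfl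

lemma not_mem_annSet_of_smul_ne_zero {a : R} {y : M} (h : a • y ≠ 0) : a ∉ AnnSet R M :=
  fun ha => h (ha y)

lemma not_mem_annSet_of_mk_ne_zero {a : R}
    (h : Submodule.Quotient.mk (p := AnnIdeal R M) a ≠ 0) : a ∉ AnnSet R M :=
  fun ha => h ((Submodule.Quotient.mk_eq_zero _).mpr ha)

lemma preservesSPrimitive_toSpanSingleton (hM : Splits S (Set.univ : Set M)) {y : M}
    (hy : SPrimitive S y) : PreservesSPrimitive S (LinearMap.toSpanSingleton R M y) :=
  fun n hn hny => hM.2 n hn y hy hny (Set.mem_univ _)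

lemma preservesSPrimitive_evalQuotAnn (hS : Saturated S) (hM : Splits S (Set.univ : Set M))
    (hR : CompactlySAtomic S (Set.univ \ AnnSet R M)) {y : M} (hy : SPrimitive S y) :
    PreservesSPrimitive S (evalQuotAnn y) := by
  rintro nbar hnbar hny
  obtain ⟨n, rfl⟩ := Submodule.Quotient.mk_surjective _ nbar
  rw [evalQuotAnn_mk] at hny ⊢
  have hn0 : n ≠ 0 := by rintro rfl; exact hny (zero_smul R y)
  obtain ⟨s, c, hs, hc, rfl⟩ :=
    hR n ⟨Set.mem_univ n, not_mem_annSet_of_smul_ne_zero hny⟩ hn0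
  rw [smul_eq_mul, mul_smul] at hny ⊢
  obtain ⟨⟨u, hu, hcu⟩, -⟩ := hnbar s hs (Submodule.Quotient.mk c) rfl
  have hcy : c • y = (u * s) • (c • y) := by
    have := congrArg (evalQuotAnn y) hcu
    rwa [map_smul, evalQuotAnn_mk, evalQuotAnn_mk, smul_assoc, smul_smul] at this
  have hcy0 : c • y ≠ 0 := right_ne_zero_of_smul hny
  obtain ⟨w, hw, hwus⟩ := exists_mul_eq_one_of_sPrimitive_eq_smul hS hM.1 hcy0
    (hM.2 c hc y hy hcy0 (Set.mem_univ _)) (hS.2.1 u hu s hs) hcy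
  refine (hM.2 c hc y hy hcy0 (Set.mem_univ _)).of_eq_smul hS (hS.2.1 w hw u hu) ?_
  rw [smul_smul, mul_assoc, hwus, one_smul]

lemma compactlySAtomic_quotAnn (hS : Saturated S) (hM : Splits S (Set.univ : Set M))
    (hR : CompactlySAtomic S (Set.univ \ AnnSet R M)) :
    CompactlySAtomic S (Set.univ : Set (R ⧸ AnnIdeal R M)) := by
  rintro mbar - hm0
  obtain ⟨m, rfl⟩ := Submodule.Quotient.mk_surjective _ mbar
  have hm := not_mem_annSet_of_mk_ne_zero hm0
  have hm0' : m ≠ 0 := by rintro rfl; exact hm fun x => zero_smul R x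
  obtain ⟨s, n, hs, hn, rfl⟩ := hR m ⟨Set.mem_univ m, hm⟩ hm0'
  have hnAnn : n ∉ AnnSet R M := fun h => hm fun x => by rw [smul_eq_mul, mul_smul, h x, smul_zero]
  obtain ⟨y, hy, hny⟩ := exists_sPrimitive_smul_ne_zero hM.1.1 hnAnn
  refine ⟨s, Submodule.Quotient.mk n, hs, ?_, rfl⟩
  exact SPrimitive.of_map hS hM.1 (evalQuotAnn y) hny (hM.2 n hn y hy hny (Set.mem_univ _))

end Annihilator

theorem statement5_general {R : Type*} [CommRing R] {M : Type*} [AddCommGroup M] [Module R M]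
    (S S' : Set R) (hS : Saturated S)
    (hsplit : Splits S (Set.univ : Set M))
    (hcompact : CompactlySAtomic S (S' \ AnnSet R M)) :
    Splits S (S' \ AnnSet R M) ∧
    (S' = Set.univ → Splits S (Set.univ : Set (R ⧸ AnnIdeal R M))) := by
  constructor
  · refine splits_of_forall_exists_map hS hsplit hcompact fun a ha _ => ?_
    obtain ⟨y, hy, hay⟩ := exists_sPrimitive_smul_ne_zero hsplit.1.1 ha.2
    exact ⟨_, preservesSPrimitive_toSpanSingleton hsplit hy, hay⟩
  · rintro rfl
    refine splits_of_forall_exists_map hS hsplit (compactlySAtomic_quotAnn hS hsplit hcompact)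
      fun abar _ ha0 => ?_
    obtain ⟨a, rfl⟩ := Submodule.Quotient.mk_surjective _ abar
    obtain ⟨y, hy, hay⟩ :=
      exists_sPrimitive_smul_ne_zero hsplit.1.1 (not_mem_annSet_of_mk_ne_zero ha0)
    exact ⟨evalQuotAnn y, preservesSPrimitive_evalQuotAnn hS hsplit hcompact hy, hay⟩

theorem statement5 {R : Type*} [CommRing R] {M : Type*} [AddCommGroup M] [Module R M]
    [Nontrivial M] (S S' : Set R) (hS : Saturated S) (hS' : Saturated S')
    (hsplit : Splits S (Set.univ : Set M))
    (hcompact : CompactlySAtomic S (S' \ AnnSet R M)) :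
    Splits S (S' \ AnnSet R M) ∧
    (S' = Set.univ → Splits S (Set.univ : Set (R ⧸ AnnIdeal R M))) :=
  statement5_general S S' hS hsplit hcompact

end FactorizationPaper
end

section
/- Suppose S ⊆ S' are saturated multiplicatively closed subsets of R, S splits E = S' \ Ann(M) (as a subset of the R-module R), and S ∩ Z(M) = S ∩ Z(R) = ∅. Let α be one of: irreducible, strongly irreducible, very strongly irreducible, let r ∈ E \ S, and let r = s·a be a compact S-atomic factorization of r (s ∈ S, a ∈ R S-primitive). Then the image r/1 of r in the localization R_S is α (as an element of R_S) if and only if a is α in R. -/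
namespace FactorizationPaper

variable {R : Type*} [CommRing R]

/-!
Since `S` is saturated and consists of non-zero-divisors, `R` embeds in `R_S` and `x/1` is a unit
exactly when `x ∈ S`. The splitting hypothesis makes divisibility by S-primitive elements descend
from `R_S` to `R`: if `t * x = d * e` with `t ∈ S`, `x ∈ E` and `e` S-primitive, write `d = s • d'`
compactly; then `d' * e` is S-primitive, so `t • x = s • (d' * e)` are two compact factorizations
and semi-factorability gives `s = z * t`, i.e. `t ∣ d`. Hence every factorization of `a/1` in
`R_S` is, up to units, the image of a factorization of `a` in `R`, and each of the three
associate relations between `a/1` and the image of a factor of `a` holds in `R_S` iff it holds in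
`R`. The three notions of irreducibility transfer accordingly, and `r/1` differs from `a/1` by the
unit `s/1`.
-/

section Associates

variable {R T : Type*} [CommRing R] [CommRing T]

def AssocOf (k : Fin 3) (a b : R) : Prop :=
  match k with
  | 0 => Assoc a b
  | 1 => StrongAssoc a b
  | 2 => VeryStrongAssoc a b

theorem irredOf_iff_assocOf {k : Fin 3} {a : R} :
    IrredOf k a ↔ ¬ IsUnit a ∧ ∀ b c, a = b * c → AssocOf k a b ∨ AssocOf k a c := by
  fin_cases k <;> rfl

theorem assoc_iff_dvd {a b : R} : Assoc a b ↔ b ∣ a ∧ a ∣ b := by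
  simp only [Assoc, SAssoc, Set.mem_univ, true_and, smul_eq_mul, dvd_iff_exists_eq_mul_left]

theorem strongAssoc_iff_associated {a b : R} : StrongAssoc a b ↔ Associated a b := by
  simp only [StrongAssoc, SStrongAssoc, Set.mem_univ, true_and, smul_eq_mul]
  constructor
  · rintro ⟨_, ⟨u, rfl⟩, rfl⟩
    exact associated_unit_mul_left b u u.isUnit
  · rintro ⟨u, rfl⟩
    exact ⟨↑u⁻¹, u⁻¹.isUnit, by rw [mul_comm a, Units.inv_mul_cancel_left]⟩

theorem veryStrongAssoc_iff {a b : R} : VeryStrongAssoc a b ↔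
    Assoc a b ∧ ((a = 0 ∧ b = 0) ∨ ∀ s, a = s * b → IsUnit s) := by
  simp only [VeryStrongAssoc, SVeryStrongAssoc, Assoc, Set.mem_univ, true_implies, smul_eq_mul]

theorem forall_isUnit_of_eq_mul_congr {a a' b b' : R} (ha : Associated a a')
    (hb : Associated b b') :
    (∀ s, a = s * b → IsUnit s) ↔ (∀ s, a' = s * b' → IsUnit s) := by
  suffices key : ∀ {a a' b b' : R}, Associated a a' → Associated b b' →
      (∀ s, a = s * b → IsUnit s) → (∀ s, a' = s * b' → IsUnit s) from
    ⟨key ha hb, key ha.symm hb.symm⟩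
  rintro a _ b _ ⟨u, rfl⟩ ⟨v, rfl⟩ h s hs
  have : a = (s * v * ↑u⁻¹) * b := by
    linear_combination (↑u⁻¹ : R) * hs - a * u.mul_inv
  simpa using h _ this

theorem assocOf_congr {k : Fin 3} {a a' b b' : R} (ha : Associated a a') (hb : Associated b b') :
    AssocOf k a b ↔ AssocOf k a' b' := by
  have hassoc : Assoc a b ↔ Assoc a' b' := by
    rw [assoc_iff_dvd, assoc_iff_dvd, ha.dvd_iff_dvd_right, hb.dvd_iff_dvd_left,
      ha.dvd_iff_dvd_left, hb.dvd_iff_dvd_right]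
  fin_cases k
  · exact hassoc
  · show StrongAssoc a b ↔ StrongAssoc a' b'
    rw [strongAssoc_iff_associated, strongAssoc_iff_associated]
    exact ⟨fun h => ha.symm.trans (h.trans hb), fun h => ha.trans (h.trans hb.symm)⟩
  · show VeryStrongAssoc a b ↔ VeryStrongAssoc a' b'
    rw [veryStrongAssoc_iff, veryStrongAssoc_iff, hassoc, ha.eq_zero_iff, hb.eq_zero_iff,
      forall_isUnit_of_eq_mul_congr ha hb]

theorem irredOf_iff_of_associated {k : Fin 3} {a a' : R} (haa' : Associated a a') :
    IrredOf k a ↔ IrredOf k a' := by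
  suffices key : ∀ {a a' : R}, Associated a a' → IrredOf k a → IrredOf k a' from
    ⟨key haa', key haa'.symm⟩
  rintro a _ ⟨u, rfl⟩ h
  rw [irredOf_iff_assocOf] at h ⊢
  refine ⟨fun hu => h.1 ((Units.isUnit_mul_units a u).mp hu), fun b c hbc => ?_⟩
  have hbu : Associated (b * ↑u⁻¹) b := associated_mul_unit_left b _ (Units.isUnit _)
  have ha : a = b * ↑u⁻¹ * c := by
    rw [mul_right_comm, ← hbc, Units.mul_inv_cancel_right]
  exact (h.2 _ _ ha).imp (assocOf_congr ⟨u, rfl⟩ hbu).mp (assocOf_congr ⟨u, rfl⟩ .rfl).mp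

theorem irredOf_map_iff (f : R →+* T) {k : Fin 3} {a : R} (hunit : IsUnit (f a) ↔ IsUnit a)
    (hlift : ∀ X Y, f a = X * Y → ∃ b c, a = b * c ∧ Associated X (f b) ∧ Associated Y (f c))
    (hassoc : ∀ b c, a = b * c → (AssocOf k (f a) (f b) ↔ AssocOf k a b)) :
    IrredOf k (f a) ↔ IrredOf k a := by
  rw [irredOf_iff_assocOf, irredOf_iff_assocOf, hunit]
  refine and_congr_right fun _ => ⟨fun h b c hbc => ?_, fun h X Y hXY => ?_⟩
  · rcases h (f b) (f c) (by rw [hbc, map_mul]) with hb | hc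
    · exact .inl ((hassoc b c hbc).mp hb)
    · exact .inr ((hassoc c b (hbc.trans (mul_comm b c))).mp hc)
  · obtain ⟨b, c, hbc, hX, hY⟩ := hlift X Y hXY
    rcases h b c hbc with hb | hc
    · exact .inl ((assocOf_congr .rfl hX).mpr ((hassoc b c hbc).mpr hb))
    · exact .inr ((assocOf_congr .rfl hY).mpr ((hassoc c b (hbc.trans (mul_comm b c))).mpr hc))

end Associates

section Splitting

variable {R : Type*} [CommRing R] {S E : Set R}

theorem Saturated.mem_of_dvd_s6 (hS : Saturated S) {x y : R} (hxy : x ∣ y) (hy : y ∈ S) : x ∈ S := by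
  obtain ⟨c, rfl⟩ := hxy
  exact (hS.2.2 x c hy).1

theorem Saturated.mem_of_isUnit (hS : Saturated S) {u : R} (hu : IsUnit u) : u ∈ S :=
  hS.mem_of_dvd_s6 hu.dvd hS.1

theorem isRegular_of_inter_zDiv_eq_empty (hZR : S ∩ ZDiv R R = ∅) {t : R} (ht : t ∈ S) :
    IsRegular t := by
  refine isLeftRegular_iff_isRegular.mp (isLeftRegular_iff_right_eq_zero_of_mul.mpr fun x hx => ?_)
  by_contra hx0
  exact hZR.subset ⟨ht, x, hx0, hx⟩

theorem SPrimitive.unit_mul {b u : R} (hb : SPrimitive S b) (hu : IsUnit u) :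
    SPrimitive S (u * b) := by
  obtain ⟨u, rfl⟩ := hu
  intro s hs n hn
  rw [smul_eq_mul] at hn
  have hb' : b = s • (↑u⁻¹ * n) := by
    rw [smul_eq_mul, mul_left_comm, ← hn, Units.inv_mul_cancel_left]
  obtain ⟨⟨σ, hσ, h1⟩, ⟨τ, hτ, h2⟩⟩ := hb s hs _ hb'
  rw [smul_eq_mul] at h1 h2
  refine ⟨⟨σ, hσ, ?_⟩, ⟨τ, hτ, ?_⟩⟩ <;> rw [smul_eq_mul]
  · rw [mul_left_comm, ← h1, Units.mul_inv_cancel_left]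
  · rw [h2, mul_left_comm, Units.mul_inv_cancel_left]

theorem isUnit_of_eq_mul_sPrimitive (h1 : 1 ∈ S) (hE : SemiSFactorable S E)
    {x z n : R} (hx : x ∈ E) (hx0 : x ≠ 0) (hxp : SPrimitive S x) (hz : z ∈ S)
    (hn : SPrimitive S n) (h : x = z * n) : IsUnit z := by
  obtain ⟨⟨p, -, hp⟩, -⟩ := hE.2 x hx hx0 1 x z n ⟨h1, hxp, (one_smul R x).symm⟩ ⟨hz, hn, h⟩
  exact IsUnit.of_mul_eq_one p (by rw [mul_comm, ← smul_eq_mul, ← hp])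


theorem SPrimitive.left_of_eq_mul (hS : Saturated S) (hsplit : Splits S E)
    (hdiv : ∀ x y, x * y ∈ E → y ∈ E) {a b c : R} (ha : a ∈ E) (ha0 : a ≠ 0)
    (hap : SPrimitive S a) (h : a = b * c) : SPrimitive S b := by
  have hb0 : b ≠ 0 := by rintro rfl; exact ha0 (h.trans (zero_mul c))
  have hc0 : c ≠ 0 := by rintro rfl; exact ha0 (h.trans (mul_zero b))
  obtain ⟨s₁, b', hs₁, hb'p, rfl⟩ := hsplit.1.1 b (hdiv c b (by rwa [mul_comm, ← h])) hb0
  obtain ⟨s₂, c', hs₂, hc'p, rfl⟩ := hsplit.1.1 c (hdiv _ c (h ▸ ha)) hc0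
  have hfac : a = (s₁ * s₂) * (b' * c') := by rw [h, smul_eq_mul, smul_eq_mul]; ring
  have hb'c' : SPrimitive S (b' * c') :=
    hsplit.2 b' hb'p c' hc'p (fun h0 => ha0 (by rw [hfac, ← smul_eq_mul b', h0, mul_zero]))
      (hdiv _ _ (hfac ▸ ha))
  have hu := isUnit_of_eq_mul_sPrimitive hS.1 hsplit.1 ha ha0 hap (hS.2.1 _ hs₁ _ hs₂) hb'c' hfac
  exact hb'p.unit_mul (isUnit_of_mul_isUnit_left hu)

theorem exists_eq_mul_of_mul_eq_mul (hsplit : Splits S E) (hdiv : ∀ x y, x * y ∈ E → y ∈ E)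
    (hSE : ∀ t ∈ S, ∀ x ∈ E, t * x ∈ E) (hZR : S ∩ ZDiv R R = ∅) {x e t d : R}
    (hx : x ∈ E) (hx0 : x ≠ 0) (hxp : SPrimitive S x) (hep : SPrimitive S e) (ht : t ∈ S)
    (h : t * x = d * e) : ∃ d', d = t * d' ∧ x = d' * e := by
  have htreg := (isRegular_of_inter_zDiv_eq_empty hZR ht).left
  have htx : t * x ∈ E := hSE t ht x hx
  have htx0 : t * x ≠ 0 := fun h0 => hx0 (htreg (h0.trans (mul_zero t).symm))
  have hd0 : d ≠ 0 := by rintro rfl; exact htx0 (h.trans (zero_mul e))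
  obtain ⟨s, d', hs, hd'p, rfl⟩ := hsplit.1.1 d (hdiv e d (by rwa [mul_comm, ← h])) hd0
  have hfac : t * x = s * (d' * e) := by rw [h, smul_eq_mul, mul_assoc]
  have hd'e : SPrimitive S (d' * e) :=
    hsplit.2 d' hd'p e hep (fun h0 => htx0 (by rw [hfac, ← smul_eq_mul d', h0, mul_zero]))
      (hdiv s _ (hfac ▸ htx))
  obtain ⟨-, z, -, hz⟩ := hsplit.1.2 (t * x) htx htx0 t x s (d' * e) ⟨ht, hxp, rfl⟩ ⟨hs, hd'e, hfac⟩
  rw [smul_eq_mul] at hz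
  exact ⟨z * d', by rw [smul_eq_mul, hz]; ring,
    htreg (show t * x = t * _ by rw [hfac, hz]; ring)⟩

end Splitting

section Localization

variable {R T : Type*} [CommRing R] [CommRing T] [Algebra R T] {S E : Set R}

theorem Saturated.isUnit_algebraMap_iff (hS : Saturated S) [IsLocalization hS.submonoid T]
    {x : R} : IsUnit (algebraMap R T x) ↔ x ∈ S := by
  rw [IsLocalization.algebraMap_isUnit_iff hS.submonoid]
  exact ⟨fun ⟨m, hm, hxm⟩ => hS.mem_of_dvd_s6 hxm hm, fun hx => ⟨x, hx, dvd_rfl⟩⟩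

theorem algebraMap_injective_of_inter_zDiv_eq_empty (hS : Saturated S)
    [IsLocalization hS.submonoid T] (hZR : S ∩ ZDiv R R = ∅) :
    Function.Injective (algebraMap R T) :=
  IsLocalization.injectiveₛ (M := hS.submonoid) T fun _ ↦ isRegular_of_inter_zDiv_eq_empty hZR

theorem exists_eq_mul_of_algebraMap_eq_mul (hS : Saturated S) [IsLocalization hS.submonoid T]
    (hsplit : Splits S E) (hdiv : ∀ x y, x * y ∈ E → y ∈ E) (hSE : ∀ t ∈ S, ∀ x ∈ E, t * x ∈ E)
    (hZR : S ∩ ZDiv R R = ∅) {x e : R} {W : T} (hx : x ∈ E) (hx0 : x ≠ 0)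
    (hxp : SPrimitive S x) (hep : SPrimitive S e) (h : algebraMap R T x = W * algebraMap R T e) :
    ∃ d, x = d * e ∧ W = algebraMap R T d := by
  obtain ⟨⟨d, t⟩, hW⟩ := IsLocalization.surj hS.submonoid W
  have htx : (t : R) * x = d * e := algebraMap_injective_of_inter_zDiv_eq_empty (T := T) hS hZR
    (by rw [map_mul, map_mul, h, ← hW]; ring)
  obtain ⟨d', rfl, hxd⟩ := exists_eq_mul_of_mul_eq_mul hsplit hdiv hSE hZR hx hx0 hxp hep t.2 htx
  refine ⟨d', hxd, (IsLocalization.map_units T t).mul_left_cancel ?_⟩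
  rw [mul_comm, hW, map_mul]

theorem exists_mul_eq_associated_of_algebraMap_eq_mul (hS : Saturated S)
    [IsLocalization hS.submonoid T] (hsplit : Splits S E) (hdiv : ∀ x y, x * y ∈ E → y ∈ E)
    (hSE : ∀ t ∈ S, ∀ x ∈ E, t * x ∈ E) (hZR : S ∩ ZDiv R R = ∅) {a : R} {X Y : T}
    (ha : a ∈ E) (ha0 : a ≠ 0) (hap : SPrimitive S a) (h : algebraMap R T a = X * Y) :
    ∃ b c, a = b * c ∧ Associated X (algebraMap R T b) ∧ Associated Y (algebraMap R T c) := by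
  obtain ⟨⟨b, t₁⟩, hX⟩ := IsLocalization.surj hS.submonoid X
  obtain ⟨⟨c, t₂⟩, hY⟩ := IsLocalization.surj hS.submonoid Y
  have ht : (t₁ * t₂ : R) ∈ S := hS.2.1 _ t₁.2 _ t₂.2
  have hbc : (t₁ * t₂ : R) * a = b * c := algebraMap_injective_of_inter_zDiv_eq_empty (T := T) hS
    hZR (by rw [map_mul, map_mul, map_mul, h, ← hX, ← hY]; ring)
  have hc0 : c ≠ 0 := by
    rintro rfl
    refine ha0 ((isRegular_of_inter_zDiv_eq_empty hZR ht).left ?_)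
    show _ * a = _ * 0
    rw [hbc, mul_zero, mul_zero]
  obtain ⟨s, c', hs, hc'p, rfl⟩ := hsplit.1.1 c (hdiv b _ (hbc ▸ hSE _ ht a ha)) hc0
  have hYc' : Associated Y (algebraMap R T c') := by
    refine (associated_mul_unit_right Y _ (IsLocalization.map_units T t₂)).trans ?_
    rw [hY, smul_eq_mul, map_mul]
    exact associated_unit_mul_left _ _ (hS.isUnit_algebraMap_iff.mpr hs)
  obtain ⟨u, hu⟩ := hYc'
  obtain ⟨d, had, hXd⟩ := exists_eq_mul_of_algebraMap_eq_mul (W := X * ↑u⁻¹) hS hsplit hdiv hSE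
    hZR ha ha0 hap hc'p (by rw [h, ← hu, mul_assoc, mul_comm Y, Units.inv_mul_cancel_left])
  exact ⟨d, c', had, ⟨u⁻¹, hXd⟩, ⟨u, hu⟩⟩

theorem algebraMap_dvd_algebraMap_iff (hS : Saturated S) [IsLocalization hS.submonoid T]
    (hsplit : Splits S E) (hdiv : ∀ x y, x * y ∈ E → y ∈ E) (hSE : ∀ t ∈ S, ∀ x ∈ E, t * x ∈ E)
    (hZR : S ∩ ZDiv R R = ∅) {x e : R} (hx : x ∈ E) (hx0 : x ≠ 0) (hxp : SPrimitive S x)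
    (hep : SPrimitive S e) : algebraMap R T e ∣ algebraMap R T x ↔ e ∣ x := by
  refine ⟨fun ⟨W, hW⟩ => ?_, map_dvd _⟩
  obtain ⟨d, hxd, -⟩ := exists_eq_mul_of_algebraMap_eq_mul hS hsplit hdiv hSE hZR hx hx0 hxp hep
    (hW.trans (mul_comm _ _))
  exact ⟨d, hxd.trans (mul_comm _ _)⟩

theorem associated_algebraMap_iff (hS : Saturated S) [IsLocalization hS.submonoid T]
    (hsplit : Splits S E) (hdiv : ∀ x y, x * y ∈ E → y ∈ E) (hSE : ∀ t ∈ S, ∀ x ∈ E, t * x ∈ E)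
    (hZR : S ∩ ZDiv R R = ∅) {a b : R} (ha : a ∈ E) (ha0 : a ≠ 0) (hap : SPrimitive S a)
    (hbp : SPrimitive S b) : Associated (algebraMap R T a) (algebraMap R T b) ↔ Associated a b := by
  refine ⟨fun ⟨u, hu⟩ => ?_, Associated.map _⟩
  obtain ⟨d, had, hd⟩ := exists_eq_mul_of_algebraMap_eq_mul hS hsplit hdiv hSE hZR ha ha0 hap hbp
    (W := ((u⁻¹ : Tˣ) : T)) (by rw [← hu, mul_comm _ (u : T), Units.inv_mul_cancel_left])
  have hdS : d ∈ S := hS.isUnit_algebraMap_iff.mp (hd ▸ u⁻¹.isUnit)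
  have hdu := isUnit_of_eq_mul_sPrimitive hS.1 hsplit.1 ha ha0 hap hdS hbp had
  exact had ▸ associated_unit_mul_left b d hdu

theorem forall_isUnit_of_algebraMap_eq_mul_iff (hS : Saturated S) [IsLocalization hS.submonoid T]
    (hsplit : Splits S E) (hdiv : ∀ x y, x * y ∈ E → y ∈ E) (hSE : ∀ t ∈ S, ∀ x ∈ E, t * x ∈ E)
    (hZR : S ∩ ZDiv R R = ∅) {a b : R} (ha : a ∈ E) (ha0 : a ≠ 0) (hap : SPrimitive S a)
    (hbp : SPrimitive S b) :
    (∀ W, algebraMap R T a = W * algebraMap R T b → IsUnit W) ↔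
      ∀ s, a = s * b → IsUnit s := by
  refine ⟨fun h s hs => ?_, fun h W hW => ?_⟩
  · have hsS : s ∈ S := hS.isUnit_algebraMap_iff.mp (h _ (by rw [hs, map_mul]))
    exact isUnit_of_eq_mul_sPrimitive hS.1 hsplit.1 ha ha0 hap hsS hbp hs
  · obtain ⟨d, had, rfl⟩ :=
      exists_eq_mul_of_algebraMap_eq_mul hS hsplit hdiv hSE hZR ha ha0 hap hbp hW
    exact (h d had).map _

theorem assocOf_algebraMap_iff (hS : Saturated S) [IsLocalization hS.submonoid T]
    (hsplit : Splits S E) (hdiv : ∀ x y, x * y ∈ E → y ∈ E) (hSE : ∀ t ∈ S, ∀ x ∈ E, t * x ∈ E)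
    (hZR : S ∩ ZDiv R R = ∅) {k : Fin 3} {a b c : R} (ha : a ∈ E) (ha0 : a ≠ 0)
    (hap : SPrimitive S a) (h : a = b * c) :
    AssocOf k (algebraMap R T a) (algebraMap R T b) ↔ AssocOf k a b := by
  have hb : b ∈ E := hdiv c b (by rwa [mul_comm, ← h])
  have hb0 : b ≠ 0 := by rintro rfl; exact ha0 (h.trans (zero_mul c))
  have hbp : SPrimitive S b := SPrimitive.left_of_eq_mul hS hsplit hdiv ha ha0 hap h
  have hba : b ∣ a := ⟨c, h⟩
  have hassoc : Assoc (algebraMap R T a) (algebraMap R T b) ↔ Assoc a b := by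
    rw [assoc_iff_dvd, assoc_iff_dvd, algebraMap_dvd_algebraMap_iff hS hsplit hdiv hSE hZR hb hb0
      hbp hap, iff_true_intro hba, iff_true_intro (map_dvd (algebraMap R T) hba)]
  have hφa : algebraMap R T a ≠ 0 := fun h0 =>
    ha0 (algebraMap_injective_of_inter_zDiv_eq_empty hS hZR (h0.trans (map_zero _).symm))
  fin_cases k
  · exact hassoc
  · show StrongAssoc _ _ ↔ StrongAssoc a b
    rw [strongAssoc_iff_associated, strongAssoc_iff_associated,
      associated_algebraMap_iff hS hsplit hdiv hSE hZR ha ha0 hap hbp]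
  · show VeryStrongAssoc _ _ ↔ VeryStrongAssoc a b
    rw [veryStrongAssoc_iff, veryStrongAssoc_iff, hassoc,
      forall_isUnit_of_algebraMap_eq_mul_iff hS hsplit hdiv hSE hZR ha ha0 hap hbp]
    simp only [hφa, ha0, false_and, false_or]

theorem irredOf_algebraMap_iff (hS : Saturated S) [IsLocalization hS.submonoid T]
    (hsplit : Splits S E) (hdiv : ∀ x y, x * y ∈ E → y ∈ E) (hSE : ∀ t ∈ S, ∀ x ∈ E, t * x ∈ E)
    (hZR : S ∩ ZDiv R R = ∅) {k : Fin 3} {a : R} (ha : a ∈ E) (ha0 : a ≠ 0) (haS : a ∉ S)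
    (hap : SPrimitive S a) : IrredOf k (algebraMap R T a) ↔ IrredOf k a :=
  irredOf_map_iff (algebraMap R T)
    (iff_of_false (mt hS.isUnit_algebraMap_iff.mp haS) (mt hS.mem_of_isUnit haS))
    (fun _ _ => exists_mul_eq_associated_of_algebraMap_eq_mul hS hsplit hdiv hSE hZR ha ha0 hap)
    (fun _ _ => assocOf_algebraMap_iff hS hsplit hdiv hSE hZR ha ha0 hap)

end Localization

section Annihilator

variable {R : Type*} [CommRing R] {M : Type*} [AddCommGroup M] [Module R M] {S S' : Set R}

theorem mem_sdiff_annSet_of_mul_mem (hS' : Saturated S') {x y : R}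
    (h : x * y ∈ S' \ AnnSet R M) : y ∈ S' \ AnnSet R M :=
  ⟨(hS'.2.2 x y h.1).2, fun hy => h.2 fun m => by rw [mul_smul, hy m, smul_zero]⟩

theorem mul_mem_sdiff_annSet (hS' : Saturated S') (hSS' : S ⊆ S') (hZM : S ∩ ZDiv R M = ∅)
    {t x : R} (ht : t ∈ S) (hx : x ∈ S' \ AnnSet R M) : t * x ∈ S' \ AnnSet R M := by
  refine ⟨hS'.2.1 t (hSS' ht) x hx.1, fun htx => hx.2 fun m => ?_⟩
  by_contra hm
  exact hZM.subset ⟨ht, x • m, hm, by rw [← mul_smul]; exact htx m⟩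

end Annihilator

theorem statement6_general {R : Type*} [CommRing R] {M : Type*} [AddCommGroup M] [Module R M]
    (S S' : Set R) (hS : Saturated S) (hS' : Saturated S') (hSS' : S ⊆ S')
    (hsplit : Splits S (S' \ AnnSet R M))
    (hZM : S ∩ ZDiv R M = ∅) (hZR : S ∩ ZDiv R R = ∅)
    (kα : Fin 3) (r : R) (hr : r ∈ S' \ AnnSet R M) (hrS : r ∉ S)
    (s a : R) (hfac : IsCompactFactorization S r s a) :
    IrredOf kα (algebraMap R (Localization hS.submonoid) r) ↔ IrredOf kα a := by
  obtain ⟨hs, hap, rfl⟩ := hfac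
  have hdiv : ∀ x y : R, x * y ∈ S' \ AnnSet R M → y ∈ S' \ AnnSet R M :=
    fun _ _ => mem_sdiff_annSet_of_mul_mem hS'
  have hSE : ∀ t ∈ S, ∀ x ∈ S' \ AnnSet R M, t * x ∈ S' \ AnnSet R M :=
    fun _ ht _ => mul_mem_sdiff_annSet hS' hSS' hZM ht
  have ha : a ∈ S' \ AnnSet R M := hdiv s a hr
  have ha0 : a ≠ 0 := by rintro rfl; exact ha.2 (zero_smul R)
  have haS : a ∉ S := fun h => hrS (hS.2.1 s hs a h)
  have hra : Associated (algebraMap R (Localization hS.submonoid) a)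
      (algebraMap R (Localization hS.submonoid) (s • a)) := by
    rw [smul_eq_mul, map_mul, mul_comm]
    exact associated_mul_unit_right _ _ (hS.isUnit_algebraMap_iff.mpr hs)
  rw [← irredOf_iff_of_associated hra]
  exact irredOf_algebraMap_iff hS hsplit hdiv hSE hZR ha ha0 haS hap

theorem statement6 {R : Type*} [CommRing R] {M : Type*} [AddCommGroup M] [Module R M]
    [Nontrivial M] (S S' : Set R) (hS : Saturated S) (hS' : Saturated S') (hSS' : S ⊆ S')
    (hsplit : Splits S (S' \ AnnSet R M))
    (hZM : S ∩ ZDiv R M = ∅) (hZR : S ∩ ZDiv R R = ∅)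
    (kα : Fin 3) (r : R) (hr : r ∈ S' \ AnnSet R M) (hrS : r ∉ S)
    (s a : R) (hfac : IsCompactFactorization S r s a) :
    IrredOf kα (algebraMap R (Localization hS.submonoid) r) ↔ IrredOf kα a :=
  statement6_general S S' hS hS' hSS' hsplit hZM hZR kα r hr hrS s a hfac

end FactorizationPaper
end

section
/- Suppose S ⊆ S' are saturated multiplicatively closed subsets of R, S splits M, S ∩ Z(M) = ∅, and S' \ Ann(M) is compactly S-atomic (as a subset of the R-module R). Let 0 ≠ m ∈ M, let β be one of: primitive, strongly primitive, very strongly primitive, and let m = s·n be a compact S-atomic factorization of m (s ∈ S, n ∈ M S-primitive). Then the image m/1 of m in the localized R_S-module M_S is T-β (with respect to T = S^{-1}S') if and only if n is S'-β in M. -/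
namespace FactorizationPaper

variable {R : Type*} [CommRing R]

/-!
Elements of `S` are non-zero-divisors on `M`, so an equation in `M_S` between fractions is an
equation `s • x = a • y` in `M`. The heart of the argument is that when `y` is `S`-primitive,
`s ∈ S` and `a ∈ S'`, such an equation forces `a = s * e` and `x = e • y`: write `a = σ r` and
`x = τ v` compactly; as `S` splits `M`, `σ • (r • y) = (s * τ) • v` are two compact
factorizations of the same element, so `σ = c * s * τ`. This pulls every `T`-relation involving
`n/1` back to an `S'`-relation involving `n`, and pushes `S'`-relations forward; finally `m/1` is
the unit `s/1` times `n/1`.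
-/

namespace Saturated

variable {S : Set R} {a b : R}

lemma one_mem (hS : Saturated S) : (1 : R) ∈ S := hS.1

lemma mul_mem (hS : Saturated S) (ha : a ∈ S) (hb : b ∈ S) : a * b ∈ S := hS.2.1 a ha b hb

lemma mem_of_mul_mem_left (hS : Saturated S) (h : a * b ∈ S) : a ∈ S := (hS.2.2 a b h).1

lemma mem_of_mul_mem_right (hS : Saturated S) (h : a * b ∈ S) : b ∈ S := (hS.2.2 a b h).2

lemma mem_of_isUnit_s7 (hS : Saturated S) (ha : IsUnit a) : a ∈ S := by
  obtain ⟨u, rfl⟩ := ha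
  exact hS.mem_of_mul_mem_left (b := ↑u⁻¹) (by rw [Units.mul_inv]; exact hS.one_mem)

lemma isUnit_mk_iff (hS : Saturated S) {s : hS.submonoid} :
    IsUnit (Localization.mk a s) ↔ a ∈ S := by
  rw [Localization.mk_eq_mk',
    ← (IsLocalization.map_units (Localization hS.submonoid) s).mul_right_iff,
    IsLocalization.mk'_spec, IsLocalization.algebraMap_isUnit_iff (M := hS.submonoid)]
  exact ⟨fun ⟨m, hm, c, hc⟩ => hS.mem_of_mul_mem_left (hc ▸ hm), fun ha => ⟨a, ha, dvd_rfl⟩⟩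

end Saturated

lemma mk_mem_locT {S S' : Set R} (hS : Saturated S) {a : R} (ha : a ∈ S') (s : hS.submonoid) :
    Localization.mk a s ∈ locT hS S' :=
  ⟨a, ha, s, rfl⟩

lemma primOf_linearEquiv_apply_iff {A : Type*} [CommRing A] {N N' : Type*} [AddCommGroup N]
    [Module A N] [AddCommGroup N'] [Module A N'] (T : Set A) (f : N ≃ₗ[A] N') (k : Fin 3) (y : N) :
    PrimOf T k (f y) ↔ PrimOf T k y := by
  fin_cases k <;>
  simp only [PrimOf, SPrimitive, SStronglyPrimitive, SVeryStronglyPrimitive, SVeryStrongAssoc,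
    SStrongAssoc, SAssoc, f.surjective.forall, ← map_smul, f.injective.eq_iff,
    map_eq_zero_iff f f.injective]

section Module

variable {M : Type*} [AddCommGroup M] [Module R M] {S S' : Set R}

lemma smul_right_injective_of_disjoint (hZM : S ∩ ZDiv R M = ∅) {s : R} (hs : s ∈ S) :
    Function.Injective (s • · : M → M) := by
  intro x y h
  by_contra hxy
  have : s ∈ S ∩ ZDiv R M := ⟨hs, x - y, sub_ne_zero.2 hxy, by simp only [smul_sub, h, sub_self]⟩
  simp [hZM] at this

lemma smul_ne_zero_of_disjoint (hZM : S ∩ ZDiv R M = ∅) {s : R} (hs : s ∈ S) {x : M}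
    (hx : x ≠ 0) : s • x ≠ 0 := by
  simpa using (smul_right_injective_of_disjoint hZM hs).ne hx

namespace SPrimitive

variable {n : M}

lemma isUnit_of_eq_smul_self (hS : Saturated S) (hsf : SemiSFactorable S (Set.univ : Set M))
    (hn : SPrimitive S n) (hn0 : n ≠ 0) {s : R} (hs : s ∈ S) (h : n = s • n) : IsUnit s := by
  obtain ⟨⟨c, -, hc⟩, -⟩ :=
    hsf.2 n trivial hn0 1 n s n ⟨hS.one_mem, hn, (one_smul R n).symm⟩ ⟨hs, hn, h⟩
  rw [smul_eq_mul] at hc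
  exact isUnit_of_mul_isUnit_right (hc ▸ isUnit_one)

lemma isUnit_of_eq_smul_smul (hS : Saturated S) (hsf : SemiSFactorable S (Set.univ : Set M))
    (hn : SPrimitive S n) (hn0 : n ≠ 0) {e : R} (he : e ∈ S) (a : R) (h : n = e • a • n) :
    IsUnit e := by
  obtain ⟨⟨α, hα, hαn⟩, -⟩ := hn e he (a • n) h
  refine isUnit_of_mul_isUnit_left (hn.isUnit_of_eq_smul_self hS hsf hn0 (hS.mul_mem he hα) ?_)
  rw [mul_smul, ← hαn]
  exact h

lemma exists_eq_mul_of_smul_eq_smul (hS : Saturated S) (hsplit : Splits S (Set.univ : Set M))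
    (hZM : S ∩ ZDiv R M = ∅) (hcompact : CompactlySAtomic S (S' \ AnnSet R M))
    {y : M} (hy : SPrimitive S y) {s a : R} {x : M} (hs : s ∈ S) (ha : a ∈ S') (hx : x ≠ 0)
    (h : s • x = a • y) : ∃ e, a = s * e ∧ x = e • y := by
  have hsx : s • x ≠ 0 := smul_ne_zero_of_disjoint hZM hs hx
  have hay : a • y ≠ 0 := h ▸ hsx
  obtain ⟨σ, r, hσ, hr, rfl⟩ :=
    hcompact a ⟨ha, fun hA => hay (hA y)⟩ (by rintro rfl; exact hay (zero_smul R y))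
  rw [smul_eq_mul, mul_smul] at hay h
  obtain ⟨τ, v, hτ, hv, rfl⟩ := hsplit.1.1 x trivial hx
  have hry : SPrimitive S (r • y) :=
    hsplit.2 r hr y hy (fun h0 => hay (by rw [h0, smul_zero])) trivial
  obtain ⟨⟨c, -, hc⟩, -⟩ := hsplit.1.2 (s • τ • v) trivial hsx σ (r • y) (s * τ) v
    ⟨hσ, hry, h⟩ ⟨hS.mul_mem hs hτ, hv, (mul_smul s τ v).symm⟩
  rw [smul_eq_mul] at hc
  refine ⟨c * τ * r, by rw [smul_eq_mul, hc]; ring, smul_right_injective_of_disjoint hZM hs ?_⟩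
  simp only [h, hc, smul_smul]
  ring_nf

lemma exists_sPrimitive_factor_of_smul_eq_smul (hS : Saturated S) (hS' : Saturated S')
    (hSS' : S ⊆ S') (hsplit : Splits S (Set.univ : Set M)) (hZM : S ∩ ZDiv R M = ∅)
    (hcompact : CompactlySAtomic S (S' \ AnnSet R M)) (hn : SPrimitive S n) (hn0 : n ≠ 0)
    {s a : R} {w : M} (hs : s ∈ S) (ha : a ∈ S') (h : s • n = a • w) :
    ∃ τ ∈ S, ∃ e ∈ S', ∃ v, SPrimitive S v ∧ w = τ • v ∧ n = e • v := by
  have hw : w ≠ 0 := by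
    rintro rfl
    exact smul_ne_zero_of_disjoint hZM hs hn0 (by rw [h, smul_zero])
  obtain ⟨τ, v, hτ, hv, rfl⟩ := hsplit.1.1 w trivial hw
  have haτ : a * τ ∈ S' := hS'.mul_mem ha (hSS' hτ)
  obtain ⟨e, hae, rfl⟩ :=
    hv.exists_eq_mul_of_smul_eq_smul hS hsplit hZM hcompact hs haτ hn0 (by rw [h, smul_smul])
  exact ⟨τ, hτ, e, hS'.mem_of_mul_mem_right (hae ▸ haτ), v, hv, rfl, rfl⟩

end SPrimitive

lemma mk_eq_mk_iff_of_disjoint (hS : Saturated S) (hZM : S ∩ ZDiv R M = ∅) {x y : M}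
    {s t : hS.submonoid} :
    LocalizedModule.mk x s = LocalizedModule.mk y t ↔ (t : R) • x = (s : R) • y := by
  rw [LocalizedModule.mk_eq]
  refine ⟨fun ⟨c, hc⟩ => smul_right_injective_of_disjoint hZM c.2 hc, fun h => ⟨1, ?_⟩⟩
  simp only [one_smul, Submonoid.smul_def, h]

lemma mk_eq_mk_smul_mk_iff (hS : Saturated S) (hZM : S ∩ ZDiv R M = ∅) {x y : M} {a : R}
    {s t u : hS.submonoid} :
    LocalizedModule.mk x s = Localization.mk a t • LocalizedModule.mk y u ↔
      ((t : R) * u) • x = (s : R) • a • y := by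
  rw [LocalizedModule.mk_smul_mk, mk_eq_mk_iff_of_disjoint hS hZM, Submonoid.coe_mul]

lemma mk_ne_zero (hS : Saturated S) (hZM : S ∩ ZDiv R M = ∅) {x : M} (hx : x ≠ 0)
    (s : hS.submonoid) : LocalizedModule.mk x s ≠ 0 := by
  rw [← LocalizedModule.zero_mk s, Ne, mk_eq_mk_iff_of_disjoint hS hZM, smul_zero]
  exact smul_ne_zero_of_disjoint hZM s.2 hx

lemma mk_one_eq_mk_smul_mk_one (hS : Saturated S) (a : R) (x : M) :
    LocalizedModule.mk (a • x) (1 : hS.submonoid) =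
      Localization.mk a (1 : hS.submonoid) • LocalizedModule.mk x (1 : hS.submonoid) := by
  rw [LocalizedModule.mk_smul_mk, one_mul]

lemma SPrimitive.exists_eq_smul_of_mk_eq_smul_mk (hS : Saturated S) (hS' : Saturated S')
    (hsplit : Splits S (Set.univ : Set M)) (hZM : S ∩ ZDiv R M = ∅)
    (hcompact : CompactlySAtomic S (S' \ AnnSet R M)) {n w : M} (hn : SPrimitive S n)
    (hw : w ≠ 0) {t : Localization hS.submonoid} (ht : t ∈ locT hS S')
    (h : LocalizedModule.mk w (1 : hS.submonoid) = t • LocalizedModule.mk n 1) :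
    ∃ e ∈ S', t = Localization.mk e 1 ∧ w = e • n := by
  obtain ⟨b, hb, s, rfl⟩ := ht
  rw [mk_eq_mk_smul_mk_iff hS hZM, OneMemClass.coe_one, mul_one, one_smul] at h
  obtain ⟨e, rfl, rfl⟩ := hn.exists_eq_mul_of_smul_eq_smul hS hsplit hZM hcompact s.2 hb hw h
  refine ⟨e, hS'.mem_of_mul_mem_right hb, ?_, rfl⟩
  rw [Localization.mk_eq_mk_iff, Localization.r_iff_exists]
  exact ⟨1, by simp only [OneMemClass.coe_one, one_mul]⟩

lemma SPrimitive.exists_mk_eq_of_mk_eq_smul (hS : Saturated S) (hS' : Saturated S')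
    (hSS' : S ⊆ S') (hsplit : Splits S (Set.univ : Set M)) (hZM : S ∩ ZDiv R M = ∅)
    (hcompact : CompactlySAtomic S (S' \ AnnSet R M)) {n : M} (hn : SPrimitive S n)
    (hn0 : n ≠ 0) {t : Localization hS.submonoid} (ht : t ∈ locT hS S')
    {x : LocalizedModule hS.submonoid M} (h : LocalizedModule.mk n 1 = t • x) :
    ∃ τ ∈ S, ∃ s : hS.submonoid, ∃ e ∈ S', ∃ v, SPrimitive S v ∧
      x = LocalizedModule.mk (τ • v) s ∧ n = e • v := by
  obtain ⟨a, ha, s₁, rfl⟩ := ht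
  induction x using LocalizedModule.induction_on with
  | h w s₂ =>
  rw [mk_eq_mk_smul_mk_iff hS hZM, OneMemClass.coe_one, one_smul] at h
  obtain ⟨τ, hτ, e, he, v, hv, rfl, hnv⟩ := hn.exists_sPrimitive_factor_of_smul_eq_smul hS hS'
    hSS' hsplit hZM hcompact hn0 (hS.mul_mem s₁.2 s₂.2) ha h
  exact ⟨τ, hτ, s₂, e, he, v, hv, rfl, hnv⟩

lemma sAssoc_mk_of_sAssoc (hS : Saturated S) (hS' : Saturated S') (hSS' : S ⊆ S') {v n : M}
    (h : SAssoc S' v n) {τ : R} (hτ : τ ∈ S) (s : hS.submonoid) :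
    SAssoc (locT hS S') (LocalizedModule.mk (τ • v) s) (LocalizedModule.mk n 1) := by
  obtain ⟨⟨α, hα, hvα⟩, ⟨β, hβ, hnβ⟩⟩ := h
  refine ⟨⟨_, mk_mem_locT hS (hS'.mul_mem (hSS' hτ) hα) s, ?_⟩,
    ⟨_, mk_mem_locT hS (hS'.mul_mem (hSS' s.2) hβ) ⟨τ, hτ⟩, ?_⟩⟩
  · rw [LocalizedModule.mk_smul_mk, mul_one, hvα, smul_smul]
  · rw [LocalizedModule.mk_smul_mk, LocalizedModule.mk_eq]
    refine ⟨1, ?_⟩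
    simp only [one_smul, Submonoid.smul_def, Submonoid.coe_mul, hnβ, smul_smul]
    ring_nf

lemma sStrongAssoc_mk_of_sStrongAssoc (hS : Saturated S) (hS' : Saturated S') (hSS' : S ⊆ S')
    {v n : M} (h : SStrongAssoc S' v n) {τ : R} (hτ : τ ∈ S) (s : hS.submonoid) :
    SStrongAssoc (locT hS S') (LocalizedModule.mk (τ • v) s) (LocalizedModule.mk n 1) := by
  obtain ⟨u, hu, huS', rfl⟩ := h
  refine ⟨Localization.mk (τ * u) s, hS.isUnit_mk_iff.2 (hS.mul_mem hτ (hS.mem_of_isUnit_s7 hu)),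
    mk_mem_locT hS (hS'.mul_mem (hSS' hτ) huS') s, ?_⟩
  rw [LocalizedModule.mk_smul_mk, mul_one, smul_smul]

lemma SPrimitive.isUnit_of_mk_smul_eq_smul_mk (hS : Saturated S) (hS' : Saturated S')
    (hSS' : S ⊆ S') (hsplit : Splits S (Set.univ : Set M)) (hZM : S ∩ ZDiv R M = ∅)
    (hcompact : CompactlySAtomic S (S' \ AnnSet R M)) {n : M} (hn : SPrimitive S n)
    (hn' : SVeryStronglyPrimitive S' n) (hn0 : n ≠ 0) {e τ : R} {v : M} (he : e ∈ S')
    (hτ : τ ∈ S) (hnv : n = e • v) {s : hS.submonoid} {t : Localization hS.submonoid}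
    (ht : t ∈ locT hS S') (h : LocalizedModule.mk (τ • v) s = t • LocalizedModule.mk n 1) :
    IsUnit t := by
  obtain ⟨b, hb, s₃, rfl⟩ := ht
  rw [mk_eq_mk_smul_mk_iff hS hZM, OneMemClass.coe_one, mul_one, ← mul_smul, ← mul_smul] at h
  obtain ⟨e', hbe', rfl⟩ := hn.exists_eq_mul_of_smul_eq_smul hS hsplit hZM hcompact
    (hS.mul_mem s₃.2 hτ) (hS'.mul_mem (hSS' s.2) hb) (right_ne_zero_of_smul (hnv ▸ hn0)) h
  have he' : e' ∈ S' := hS'.mem_of_mul_mem_right (hbe' ▸ hS'.mul_mem (hSS' s.2) hb)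
  rcases hn' e he (e' • n) hnv with ⟨-, ⟨-, h0⟩ | hunit⟩
  · exact absurd h0 hn0
  have he'S : e' ∈ S := hS.mem_of_isUnit_s7 (hunit e' he' rfl)
  rw [hS.isUnit_mk_iff]
  exact hS.mem_of_mul_mem_right (a := (s : R))
    (by rw [hbe']; exact hS.mul_mem (hS.mul_mem s₃.2 hτ) he'S)

lemma sPrimitive_mk_one_iff (hS : Saturated S) (hS' : Saturated S') (hSS' : S ⊆ S')
    (hsplit : Splits S (Set.univ : Set M)) (hZM : S ∩ ZDiv R M = ∅)
    (hcompact : CompactlySAtomic S (S' \ AnnSet R M)) {n : M} (hn : SPrimitive S n) (hn0 : n ≠ 0) :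
    SPrimitive (locT hS S') (LocalizedModule.mk n (1 : hS.submonoid)) ↔ SPrimitive S' n := by
  refine ⟨fun h a ha w hw => ?_, fun h t ht x hx => ?_⟩
  · obtain ⟨⟨t, ht, hwt⟩, -⟩ :=
      h _ (mk_mem_locT hS ha 1) _ (by rw [hw, mk_one_eq_mk_smul_mk_one])
    obtain ⟨e, he, -, hwe⟩ := hn.exists_eq_smul_of_mk_eq_smul_mk hS hS' hsplit hZM hcompact
      (right_ne_zero_of_smul (hw ▸ hn0)) ht hwt
    exact ⟨⟨e, he, hwe⟩, ⟨a, ha, hw⟩⟩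
  · obtain ⟨τ, hτ, s, e, he, v, -, rfl, hnv⟩ :=
      hn.exists_mk_eq_of_mk_eq_smul hS hS' hSS' hsplit hZM hcompact hn0 ht hx
    exact sAssoc_mk_of_sAssoc hS hS' hSS' (h e he v hnv) hτ s

lemma sStronglyPrimitive_mk_one_iff (hS : Saturated S) (hS' : Saturated S') (hSS' : S ⊆ S')
    (hsplit : Splits S (Set.univ : Set M)) (hZM : S ∩ ZDiv R M = ∅)
    (hcompact : CompactlySAtomic S (S' \ AnnSet R M)) {n : M} (hn : SPrimitive S n) (hn0 : n ≠ 0) :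
    SStronglyPrimitive (locT hS S') (LocalizedModule.mk n (1 : hS.submonoid)) ↔
      SStronglyPrimitive S' n := by
  refine ⟨fun h a ha w hw => ?_, fun h t ht x hx => ?_⟩
  · obtain ⟨t, htU, ht, hwt⟩ := h _ (mk_mem_locT hS ha 1) _ (by rw [hw, mk_one_eq_mk_smul_mk_one])
    obtain ⟨e, he, rfl, hwe⟩ := hn.exists_eq_smul_of_mk_eq_smul_mk hS hS' hsplit hZM hcompact
      (right_ne_zero_of_smul (hw ▸ hn0)) ht hwt
    have heS : e ∈ S := hS.isUnit_mk_iff.1 htU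
    refine ⟨e, hn.isUnit_of_eq_smul_smul hS hsplit.1 hn0 heS a ?_, he, hwe⟩
    rw [smul_comm, ← hwe]
    exact hw
  · obtain ⟨τ, hτ, s, e, he, v, -, rfl, hnv⟩ :=
      hn.exists_mk_eq_of_mk_eq_smul hS hS' hSS' hsplit hZM hcompact hn0 ht hx
    exact sStrongAssoc_mk_of_sStrongAssoc hS hS' hSS' (h e he v hnv) hτ s

lemma sVeryStronglyPrimitive_mk_one_iff (hS : Saturated S) (hS' : Saturated S') (hSS' : S ⊆ S')
    (hsplit : Splits S (Set.univ : Set M)) (hZM : S ∩ ZDiv R M = ∅)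
    (hcompact : CompactlySAtomic S (S' \ AnnSet R M)) {n : M} (hn : SPrimitive S n) (hn0 : n ≠ 0) :
    SVeryStronglyPrimitive (locT hS S') (LocalizedModule.mk n (1 : hS.submonoid)) ↔
      SVeryStronglyPrimitive S' n := by
  refine ⟨fun h a ha w hw => ?_, fun h t ht x hx => ?_⟩
  · have hw0 : w ≠ 0 := right_ne_zero_of_smul (hw ▸ hn0)
    obtain ⟨⟨⟨t, ht, hwt⟩, -⟩, hunit⟩ :=
      h _ (mk_mem_locT hS ha 1) _ (by rw [hw, mk_one_eq_mk_smul_mk_one])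
    obtain ⟨e, he, -, hwe⟩ :=
      hn.exists_eq_smul_of_mk_eq_smul_mk hS hS' hsplit hZM hcompact hw0 ht hwt
    refine ⟨⟨⟨e, he, hwe⟩, ⟨a, ha, hw⟩⟩, Or.inr fun b hb hwb => ?_⟩
    rcases hunit with ⟨h0, -⟩ | hunit
    · exact absurd h0 (mk_ne_zero hS hZM hw0 1)
    have hbS : b ∈ S := hS.isUnit_mk_iff.1 <|
      hunit _ (mk_mem_locT hS hb 1) (by rw [hwb, mk_one_eq_mk_smul_mk_one])
    refine hn.isUnit_of_eq_smul_smul hS hsplit.1 hn0 hbS a ?_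
    rw [smul_comm, ← hwb]
    exact hw
  · obtain ⟨τ, hτ, s, e, he, v, -, rfl, hnv⟩ :=
      hn.exists_mk_eq_of_mk_eq_smul hS hS' hSS' hsplit hZM hcompact hn0 ht hx
    exact ⟨sAssoc_mk_of_sAssoc hS hS' hSS' (h e he v hnv).1 hτ s, Or.inr fun t' ht' hxt' =>
      hn.isUnit_of_mk_smul_eq_smul_mk hS hS' hSS' hsplit hZM hcompact h hn0 he hτ hnv ht' hxt'⟩

end Module

theorem statement7_general {R : Type*} [CommRing R] {M : Type*} [AddCommGroup M] [Module R M]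
    (S S' : Set R) (hS : Saturated S) (hS' : Saturated S') (hSS' : S ⊆ S')
    (hsplit : Splits S (Set.univ : Set M)) (hZM : S ∩ ZDiv R M = ∅)
    (hcompact : CompactlySAtomic S (S' \ AnnSet R M))
    (m : M) (hm : m ≠ 0) (kβ : Fin 3) (s : R) (n : M)
    (hfac : IsCompactFactorization S m s n) :
    PrimOf (locT hS S') kβ (LocalizedModule.mkLinearMap hS.submonoid M m) ↔
      PrimOf S' kβ n := by
  obtain ⟨hs, hn, rfl⟩ := hfac
  have hn0 : n ≠ 0 := right_ne_zero_of_smul hm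
  obtain ⟨u, hu⟩ := (hS.isUnit_mk_iff (s := 1)).2 hs
  have hmk : LocalizedModule.mkLinearMap hS.submonoid M (s • n) =
      LinearEquiv.smulOfUnit u (LocalizedModule.mk n 1) := by
    rw [LocalizedModule.mkLinearMap_apply, mk_one_eq_mk_smul_mk_one, ← hu]
    rfl
  rw [hmk, primOf_linearEquiv_apply_iff]
  fin_cases kβ
  · exact sPrimitive_mk_one_iff hS hS' hSS' hsplit hZM hcompact hn hn0
  · exact sStronglyPrimitive_mk_one_iff hS hS' hSS' hsplit hZM hcompact hn hn0
  · exact sVeryStronglyPrimitive_mk_one_iff hS hS' hSS' hsplit hZM hcompact hn hn0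

theorem statement7 {R : Type*} [CommRing R] {M : Type*} [AddCommGroup M] [Module R M]
    [Nontrivial M] (S S' : Set R) (hS : Saturated S) (hS' : Saturated S') (hSS' : S ⊆ S')
    (hsplit : Splits S (Set.univ : Set M)) (hZM : S ∩ ZDiv R M = ∅)
    (hcompact : CompactlySAtomic S (S' \ AnnSet R M))
    (m : M) (hm : m ≠ 0) (kβ : Fin 3) (s : R) (n : M)
    (hfac : IsCompactFactorization S m s n) :
    PrimOf (locT hS S') kβ (LocalizedModule.mkLinearMap hS.submonoid M m) ↔
      PrimOf S' kβ n :=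
  statement7_general S S' hS hS' hSS' hsplit hZM hcompact m hm kβ s n hfac

end FactorizationPaper
end
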